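/- arXiv:math/0609578 — 8 statements merged into one kernel-verified Lean document; each statement's English description precedes it below -/
import Mathlib

section
/- Let γ : ℝ² ∖ {(−1,0),(1,0)} → ℝ² be the planar dipole field γ(r) = −(r₁ − r)/‖r₁ − r‖³ + (r₂ − r)/‖r₂ − r‖³ with r₁ = (−1,0), r₂ = (1,0). The determinant J(u,v) of the Jacobian matrix of γ satisfies J(u,v) ≤ 0 at every point (u,v) of the domain, and J(u,v) < 0 at every point (u,v) ≠ (0,0) of the domain; in particular γ is a submersion away from the origin. -/
/-- Position of the body of mass `-1`. -/
noncomputable def rNeg : EuclideanSpace ℝ (Fin 2) := !₂[-1, 0]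

/-- Position of the body of mass `1`. -/
noncomputable def rPos : EuclideanSpace ℝ (Fin 2) := !₂[1, 0]

/-- The planar field generated by the dipole with masses `-1` at `(-1,0)` and `1` at `(1,0)`:
`γ(r) = -(r₁ - r)/‖r₁ - r‖³ + (r₂ - r)/‖r₂ - r‖³`. -/
noncomputable def dipoleField (r : EuclideanSpace ℝ (Fin 2)) : EuclideanSpace ℝ (Fin 2) :=
  -((1 / ‖rNeg - r‖ ^ 3) • (rNeg - r)) + (1 / ‖rPos - r‖ ^ 3) • (rPos - r)

/-! With `g x = ‖x‖⁻³ • x`, the field is `r ↦ -g (rNeg - r) + g (rPos - r)`, so its derivative is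
`Dg (rNeg - r) - Dg (rPos - r)`, where `Dg x = ‖x‖⁻³ (1 - 3 x xᵀ / ‖x‖²)`. For plane vectors `x, y` of
norms `s, t`,
  `det (Dg x - Dg y) = -(2 (s³ - t³)² + 9 s t (x₀ y₁ - x₁ y₀)²) / (s⁶ t⁶) ≤ 0`.
For `x = rNeg - r` and `y = rPos - r` we have `s² - t² = 4 r₀` and `x₀ y₁ - x₁ y₀ = 2 r₁`, so the
determinant vanishes only at the origin. -/

section InverseSquareField

variable {E : Type*} [NormedAddCommGroup E] [InnerProductSpace ℝ E]

noncomputable def inverseSquareField (x : E) : E := (1 / ‖x‖ ^ 3) • x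

noncomputable def inverseSquareFieldFDeriv (x : E) : E →L[ℝ] E :=
  (‖x‖ ^ 3)⁻¹ • ContinuousLinearMap.id ℝ E - (3 * (‖x‖ ^ 5)⁻¹) • (innerSL ℝ x).smulRight x

theorem hasFDerivAt_inverseSquareField {x : E} (hx : x ≠ 0) :
    HasFDerivAt inverseSquareField (inverseSquareFieldFDeriv x) x := by
  have hnorm : 0 < ‖x‖ := norm_pos_iff.mpr hx
  have hcube := hasFDerivAt_norm_rpow x (p := 3) (by norm_num)
  have hprod := ((hasDerivAt_inv (Real.rpow_pos_of_pos hnorm 3).ne').comp_hasFDerivAt x hcube).smul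
    (hasFDerivAt_id x)
  have hfun : (inverseSquareField : E → E) = ((fun t : ℝ => t⁻¹) ∘ fun y : E => ‖y‖ ^ (3 : ℝ)) • id := by
    funext y
    simp [inverseSquareField]
  rw [hfun]
  refine hprod.congr_fderiv ?_
  ext y
  norm_num [inverseSquareFieldFDeriv, smul_smul, sub_eq_add_neg]
  congr 1
  field_simp

theorem hasFDerivAt_inverseSquareField_const_sub {a r : E} (h : r ≠ a) :
    HasFDerivAt (fun r => inverseSquareField (a - r)) (-inverseSquareFieldFDeriv (a - r)) r := by
  have hsub := (hasFDerivAt_const a r).sub (hasFDerivAt_id (𝕜 := ℝ) r)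
  refine ((hasFDerivAt_inverseSquareField (sub_ne_zero.mpr h.symm)).comp r hsub).congr_fderiv ?_
  ext1 v
  simp

end InverseSquareField

theorem ContinuousLinearMap.surjective_of_det_ne_zero {E : Type*} [NormedAddCommGroup E]
    [NormedSpace ℝ E] [FiniteDimensional ℝ E] {f : E →L[ℝ] E} (h : f.det ≠ 0) :
    Function.Surjective f :=
  ((Module.End.isUnit_iff _).mp
    ((LinearMap.isUnit_iff_isUnit_det (f : E →ₗ[ℝ] E)).mpr (isUnit_iff_ne_zero.mpr h))).surjective

local notation "ℝ²" => EuclideanSpace ℝ (Fin 2)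

theorem EuclideanSpace.norm_sq_fin_two (x : ℝ²) : ‖x‖ ^ 2 = x 0 ^ 2 + x 1 ^ 2 := by
  simp [EuclideanSpace.norm_sq_eq, Fin.sum_univ_two]

theorem det_inverseSquareFieldFDeriv_sub {x y : ℝ²} (hx : x ≠ 0) (hy : y ≠ 0) :
    (inverseSquareFieldFDeriv x - inverseSquareFieldFDeriv y).det =
      -(2 * (‖x‖ ^ 3 - ‖y‖ ^ 3) ^ 2 + 9 * ‖x‖ * ‖y‖ * (x 0 * y 1 - x 1 * y 0) ^ 2) /
        (‖x‖ ^ 6 * ‖y‖ ^ 6) := by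
  have hx' : ‖x‖ ≠ 0 := norm_ne_zero_iff.mpr hx
  have hy' : ‖y‖ ≠ 0 := norm_ne_zero_iff.mpr hy
  rw [ContinuousLinearMap.det, ← LinearMap.det_toMatrix (PiLp.basisFun 2 ℝ (Fin 2)),
    Matrix.det_fin_two]
  simp only [inverseSquareFieldFDeriv, ContinuousLinearMap.toLinearMap_sub,
    ContinuousLinearMap.toLinearMap_smul, ContinuousLinearMap.coe_id, ContinuousLinearMap.coe_smulRight,
    ContinuousLinearMap.toLinearMap_innerSL_apply, Fin.isValue, LinearMap.toMatrix_apply,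
    PiLp.basisFun_apply, LinearMap.sub_apply, LinearMap.smul_apply, LinearMap.id_coe, id_eq,
    LinearMap.coe_smulRight, innerₛₗ_apply_apply, EuclideanSpace.inner_single_right,
    Real.ringHom_apply, one_mul, map_sub, map_smul, Finsupp.coe_sub, Finsupp.coe_smul, Pi.sub_apply,
    Pi.smul_apply, PiLp.basisFun_repr, PiLp.single_eq_same, smul_eq_mul, mul_one, ne_eq,
    zero_ne_one, not_false_eq_true, PiLp.single_eq_of_ne, mul_zero, zero_sub, sub_neg_eq_add,
    one_ne_zero, neg_add_rev]
  field_simp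
  linear_combination
    (3 * ‖x‖ ^ 2 * ‖y‖ ^ 10 - 3 * ‖x‖ ^ 5 * ‖y‖ ^ 7) * EuclideanSpace.norm_sq_fin_two x
      + (3 * ‖x‖ ^ 10 * ‖y‖ ^ 2 - 3 * ‖x‖ ^ 7 * ‖y‖ ^ 5) * EuclideanSpace.norm_sq_fin_two y

theorem det_inverseSquareFieldFDeriv_sub_nonpos {x y : ℝ²} (hx : x ≠ 0) (hy : y ≠ 0) :
    (inverseSquareFieldFDeriv x - inverseSquareFieldFDeriv y).det ≤ 0 := by
  rw [det_inverseSquareFieldFDeriv_sub hx hy, neg_div, neg_nonpos]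
  positivity

theorem det_inverseSquareFieldFDeriv_sub_neg {x y : ℝ²} (hx : x ≠ 0) (hy : y ≠ 0)
    (h : ‖x‖ ≠ ‖y‖ ∨ x 0 * y 1 - x 1 * y 0 ≠ 0) :
    (inverseSquareFieldFDeriv x - inverseSquareFieldFDeriv y).det < 0 := by
  have hx' : 0 < ‖x‖ := norm_pos_iff.mpr hx
  have hy' : 0 < ‖y‖ := norm_pos_iff.mpr hy
  rw [det_inverseSquareFieldFDeriv_sub hx hy, neg_div, neg_lt_zero]
  refine div_pos ?_ (by positivity)
  rcases h with hnorm | hcross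
  · have hcube : ‖x‖ ^ 3 - ‖y‖ ^ 3 ≠ 0 := sub_ne_zero.mpr fun e =>
      hnorm ((pow_left_inj₀ hx'.le hy'.le three_ne_zero).mp e)
    have := sq_pos_of_ne_zero hcube
    positivity
  · positivity

theorem hasFDerivAt_dipoleField {r : ℝ²} (h₁ : r ≠ rNeg) (h₂ : r ≠ rPos) :
    HasFDerivAt dipoleField
      (inverseSquareFieldFDeriv (rNeg - r) - inverseSquareFieldFDeriv (rPos - r)) r := by
  refine ((hasFDerivAt_inverseSquareField_const_sub h₁).neg.add
    (hasFDerivAt_inverseSquareField_const_sub h₂)).congr_fderiv ?_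
  rw [neg_neg, ← sub_eq_add_neg]

theorem norm_rNeg_sub_ne_norm_rPos_sub_or_cross_ne_zero {r : ℝ²} (hr : r ≠ 0) :
    ‖rNeg - r‖ ≠ ‖rPos - r‖ ∨ (rNeg - r) 0 * (rPos - r) 1 - (rNeg - r) 1 * (rPos - r) 0 ≠ 0 := by
  contrapose! hr
  obtain ⟨hnorm, hcross⟩ := hr
  have hsq := congrArg (· ^ 2) hnorm
  simp only [EuclideanSpace.norm_sq_fin_two, rNeg, rPos, PiLp.sub_apply, Matrix.cons_val_zero,
    Matrix.cons_val_one, Matrix.cons_val_fin_one] at hsq hcross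
  have h₀ : r 0 = 0 := by linear_combination hsq / 4
  have h₁ : r 1 = 0 := by linear_combination hcross / 2
  ext i
  fin_cases i <;> simp [h₀, h₁]

/-- The dipole field is differentiable on its domain, the determinant of its Jacobian
matrix (the determinant of its Fréchet derivative) is nonpositive everywhere on the
domain, and it is negative away from the origin; in particular the dipole field is a
submersion away from the origin. -/
theorem dipole_jacobian_det_nonpos
    (r : EuclideanSpace ℝ (Fin 2)) (hr₁ : r ≠ rNeg) (hr₂ : r ≠ rPos) :
    DifferentiableAt ℝ dipoleField r ∧
    (fderiv ℝ dipoleField r).det ≤ 0 ∧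
    (r ≠ 0 →
      (fderiv ℝ dipoleField r).det < 0 ∧ Function.Surjective (fderiv ℝ dipoleField r)) := by
  have hderiv := hasFDerivAt_dipoleField hr₁ hr₂
  have hx : rNeg - r ≠ 0 := sub_ne_zero.mpr hr₁.symm
  have hy : rPos - r ≠ 0 := sub_ne_zero.mpr hr₂.symm
  rw [hderiv.fderiv]
  refine ⟨hderiv.differentiableAt, det_inverseSquareFieldFDeriv_sub_nonpos hx hy, fun hr => ?_⟩
  have hneg := det_inverseSquareFieldFDeriv_sub_neg hx hy
    (norm_rNeg_sub_ne_norm_rPos_sub_or_cross_ne_zero hr)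
  exact ⟨hneg, ContinuousLinearMap.surjective_of_det_ne_zero hneg.ne⟩
end

section
/- Let γ : ℝ² ∖ {(−1,0),(1,0)} → ℝ² be the planar dipole field γ(r) = −(r₁ − r)/‖r₁ − r‖³ + (r₂ − r)/‖r₂ − r‖³ with r₁ = (−1,0), r₂ = (1,0). Then γ(r) ≠ 0 for every r in the domain, i.e. the dipole field never vanishes. -/
/-!
If the field vanishes, its two terms `(rNeg - r) / ‖rNeg - r‖³` and `(rPos - r) / ‖rPos - r‖³`
coincide. But `v ↦ v / ‖v‖³` is injective on the whole plane: the norm `‖v‖⁻²` of the image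
determines `‖v‖` and hence `v`, and only `0` maps to `0` (with `1 / 0 = 0`, which is how the
field is defined at the two bodies). So `rNeg - r = rPos - r`, which is absurd.
-/

section InversePower

variable {E : Type*} [NormedAddCommGroup E] [NormedSpace ℝ E]

lemma norm_inv_norm_pow_smul (n : ℕ) (v : E) : ‖(‖v‖ ^ n)⁻¹ • v‖ = ‖v‖ / ‖v‖ ^ n := by
  rw [norm_smul, norm_inv, norm_pow, norm_norm, inv_mul_eq_div]

lemma inv_norm_pow_smul_eq_zero_iff (n : ℕ) (v : E) : (‖v‖ ^ n)⁻¹ • v = 0 ↔ v = 0 := by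
  rw [smul_eq_zero, inv_eq_zero,
    or_iff_right_of_imp fun h => norm_eq_zero.mp (eq_zero_of_pow_eq_zero h)]

lemma inv_norm_pow_smul_injective {n : ℕ} (hn : n ≠ 1) :
    Function.Injective fun v : E => (‖v‖ ^ n)⁻¹ • v := by
  intro u v huv
  simp only at huv
  rcases eq_or_ne u 0 with rfl | hu
  · rw [smul_zero, eq_comm, inv_norm_pow_smul_eq_zero_iff] at huv
    exact huv.symm
  rcases eq_or_ne v 0 with rfl | hv
  · rwa [smul_zero, inv_norm_pow_smul_eq_zero_iff] at huv
  have hu' : 0 < ‖u‖ := norm_pos_iff.mpr hu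
  have hv' : 0 < ‖v‖ := norm_pos_iff.mpr hv
  have hnorm : ‖u‖ = ‖v‖ := by
    have h := congrArg norm huv
    rw [norm_inv_norm_pow_smul, norm_inv_norm_pow_smul] at h
    rcases n with _ | _ | m
    · simpa using h
    · exact absurd rfl hn
    · have hdiv (x : ℝ) (hx : 0 < x) : x / x ^ (m + 2) = (x ^ (m + 1))⁻¹ := by
        field_simp
        ring
      rw [hdiv _ hu', hdiv _ hv', inv_inj] at h
      exact (pow_left_inj₀ hu'.le hv'.le m.succ_ne_zero).mp h
  rw [hnorm] at huv
  exact smul_right_injective E (by positivity) huv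

end InversePower

lemma rNeg_ne_rPos : rNeg ≠ rPos := by
  intro h
  have := congrArg (fun x => x 0) h
  norm_num [rNeg, rPos] at this

theorem dipole_field_ne_zero_general
    (r : EuclideanSpace ℝ (Fin 2)) :
    dipoleField r ≠ 0 := by
  intro h
  have hterms : (‖rNeg - r‖ ^ 3)⁻¹ • (rNeg - r) = (‖rPos - r‖ ^ 3)⁻¹ • (rPos - r) := by
    rw [dipoleField, neg_add_eq_zero] at h
    simpa only [one_div] using h
  exact rNeg_ne_rPos (sub_left_injective (inv_norm_pow_smul_injective (by norm_num) hterms))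

/-- The dipole field never vanishes on its domain. -/
theorem dipole_field_ne_zero
    (r : EuclideanSpace ℝ (Fin 2)) (hr₁ : r ≠ rNeg) (hr₂ : r ≠ rPos) :
    dipoleField r ≠ 0 :=
  dipole_field_ne_zero_general r
end

section
/- Let x and y be real numbers with 0 < x < y. There exists exactly one pair (u, v) of positive real numbers with (x+y)u + (x−y)v > 0 satisfying the system: u^{−2/3} + v^{−2/3} = 1 and (((x+y)u + (x−y)v)/(2x))^{−2/3} + (((x+y)u + (y−x)v)/(2y))^{−2/3} = 2. -/
open Real Set

private lemma rpow_neg_anti {a b e : ℝ} (ha : 0 < a) (hab : a ≤ b) (he : 0 ≤ e) :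
    b ^ (-e) ≤ a ^ (-e) := by
  rw [Real.rpow_neg (ha.trans_le hab).le, Real.rpow_neg ha.le]
  exact inv_anti₀ (Real.rpow_pos_of_pos ha e) (Real.rpow_le_rpow ha.le hab he)

private lemma key_ineq {x y u v : ℝ} (hx : 0 < x) (hxy : x < y) (hu : 0 < u) (hv : 0 < v)
    (hP : 0 < (x + y) * u - (y - x) * v) :
    ((y - x) * v ^ (5/3 : ℝ) - (x + y) * u ^ (5/3 : ℝ)) *
        (y ^ (2/3 : ℝ) * ((x + y) * u - (y - x) * v) ^ (5/3 : ℝ))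
      < ((x + y) * u ^ (5/3 : ℝ) + (y - x) * v ^ (5/3 : ℝ)) *
        (x ^ (2/3 : ℝ) * ((x + y) * u + (y - x) * v) ^ (5/3 : ℝ)) := by
  have hy : (0:ℝ) < y := hx.trans hxy
  have hue : (0:ℝ) < u ^ (5/3 : ℝ) := Real.rpow_pos_of_pos hu _
  have hve : (0:ℝ) < v ^ (5/3 : ℝ) := Real.rpow_pos_of_pos hv _
  have hyx : (0:ℝ) < y - x := by linarith
  have hxyp : (0:ℝ) < x + y := by linarith
  have ha : (0:ℝ) < (x + y) * u ^ (5/3 : ℝ) := mul_pos hxyp hue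
  have hb : (0:ℝ) < (y - x) * v ^ (5/3 : ℝ) := mul_pos hyx hve
  have hQ : (0:ℝ) < (x + y) * u + (y - x) * v := by positivity
  have hP5 : (0:ℝ) < ((x + y) * u - (y - x) * v) ^ (5/3 : ℝ) := Real.rpow_pos_of_pos hP _
  have hQ5 : (0:ℝ) < ((x + y) * u + (y - x) * v) ^ (5/3 : ℝ) := Real.rpow_pos_of_pos hQ _
  have hX2 : (0:ℝ) < x ^ (2/3 : ℝ) := Real.rpow_pos_of_pos hx _
  have hY2 : (0:ℝ) < y ^ (2/3 : ℝ) := Real.rpow_pos_of_pos hy _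
  rcases le_or_gt ((y - x) * v ^ (5/3 : ℝ)) ((x + y) * u ^ (5/3 : ℝ)) with hab | hab
  · calc ((y - x) * v ^ (5/3 : ℝ) - (x + y) * u ^ (5/3 : ℝ)) *
        (y ^ (2/3 : ℝ) * ((x + y) * u - (y - x) * v) ^ (5/3 : ℝ)) ≤ 0 :=
          mul_nonpos_of_nonpos_of_nonneg (by linarith) (by positivity)
      _ < _ := by positivity
  · have huv : u < v := by
      by_contra h
      push_neg at h
      have : v ^ (5/3 : ℝ) ≤ u ^ (5/3 : ℝ) := Real.rpow_le_rpow hv.le h (by norm_num)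
      nlinarith
    have hyPxQ : y * ((x + y) * u - (y - x) * v) < x * ((x + y) * u + (y - x) * v) := by
      nlinarith [mul_pos (mul_pos hxyp hyx) (sub_pos.mpr huv)]
    have h1 : (y * ((x + y) * u - (y - x) * v)) ^ (5/3 : ℝ)
        < (x * ((x + y) * u + (y - x) * v)) ^ (5/3 : ℝ) :=
      Real.rpow_lt_rpow (by positivity) hyPxQ (by norm_num)
    rw [Real.mul_rpow hy.le hP.le, Real.mul_rpow hx.le hQ.le] at h1
    have hy53 : y ^ (5/3 : ℝ) = y * y ^ (2/3 : ℝ) := by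
      rw [← Real.rpow_one_add' hy.le (by norm_num)]; norm_num
    have hx53 : x ^ (5/3 : ℝ) = x * x ^ (2/3 : ℝ) := by
      rw [← Real.rpow_one_add' hx.le (by norm_num)]; norm_num
    rw [hy53, hx53] at h1
    have hC : y ^ (2/3 : ℝ) * ((x + y) * u - (y - x) * v) ^ (5/3 : ℝ)
        < x ^ (2/3 : ℝ) * ((x + y) * u + (y - x) * v) ^ (5/3 : ℝ) := by
      nlinarith [mul_pos hX2 hQ5]
    nlinarith [mul_pos hY2 hP5, mul_pos hX2 hQ5, mul_pos ha (mul_pos hY2 hP5),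
      mul_pos ha (mul_pos hX2 hQ5)]

private noncomputable def Pf (x y s : ℝ) : ℝ :=
  (x + y) * s ^ (-(3/2) : ℝ) + (x - y) * (1 - s) ^ (-(3/2) : ℝ)
private noncomputable def Qf (x y s : ℝ) : ℝ :=
  (x + y) * s ^ (-(3/2) : ℝ) + (y - x) * (1 - s) ^ (-(3/2) : ℝ)
private noncomputable def Ff (x y s : ℝ) : ℝ :=
  (Pf x y s / (2*x)) ^ (-(2/3) : ℝ) + (Qf x y s / (2*y)) ^ (-(2/3) : ℝ)

private lemma hasDerivAt_Pf {x y s : ℝ} (hs : s ∈ Ioo (0:ℝ) 1) :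
    HasDerivAt (Pf x y)
      ((x + y) * (-(3/2) * s ^ (-(5/2) : ℝ)) + (x - y) * ((3/2) * (1 - s) ^ (-(5/2) : ℝ))) s := by
  have hs0 : (0:ℝ) < s := hs.1
  have hs1 : (0:ℝ) < 1 - s := by linarith [hs.2]
  have h1 : HasDerivAt (fun t : ℝ => t ^ (-(3/2) : ℝ)) (-(3/2) * s ^ (-(5/2) : ℝ)) s := by
    have := Real.hasDerivAt_rpow_const (x := s) (p := (-(3/2) : ℝ)) (Or.inl hs0.ne')
    convert this using 1; norm_num
  have h2 : HasDerivAt (fun t : ℝ => (1 - t) ^ (-(3/2) : ℝ)) ((3/2) * (1 - s) ^ (-(5/2) : ℝ)) s := by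
    have hin : HasDerivAt (fun t : ℝ => 1 - t) (-1) s := (hasDerivAt_id s).const_sub 1
    have := hin.rpow_const (p := (-(3/2) : ℝ)) (Or.inl hs1.ne')
    convert this using 1; norm_num
  exact (h1.const_mul (x + y)).add (h2.const_mul (x - y))

private lemma hasDerivAt_Qf {x y s : ℝ} (hs : s ∈ Ioo (0:ℝ) 1) :
    HasDerivAt (Qf x y)
      ((x + y) * (-(3/2) * s ^ (-(5/2) : ℝ)) + (y - x) * ((3/2) * (1 - s) ^ (-(5/2) : ℝ))) s := by
  have hs0 : (0:ℝ) < s := hs.1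
  have hs1 : (0:ℝ) < 1 - s := by linarith [hs.2]
  have h1 : HasDerivAt (fun t : ℝ => t ^ (-(3/2) : ℝ)) (-(3/2) * s ^ (-(5/2) : ℝ)) s := by
    have := Real.hasDerivAt_rpow_const (x := s) (p := (-(3/2) : ℝ)) (Or.inl hs0.ne')
    convert this using 1; norm_num
  have h2 : HasDerivAt (fun t : ℝ => (1 - t) ^ (-(3/2) : ℝ)) ((3/2) * (1 - s) ^ (-(5/2) : ℝ)) s := by
    have hin : HasDerivAt (fun t : ℝ => 1 - t) (-1) s := (hasDerivAt_id s).const_sub 1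
    have := hin.rpow_const (p := (-(3/2) : ℝ)) (Or.inl hs1.ne')
    convert this using 1; norm_num
  exact (h1.const_mul (x + y)).add (h2.const_mul (y - x))

private lemma Qf_pos {x y s : ℝ} (hx : 0 < x) (hxy : x < y) (hs : s ∈ Ioo (0:ℝ) 1) :
    0 < Qf x y s := by
  have hs1 : (0:ℝ) < 1 - s := by linarith [hs.2]
  have := Real.rpow_pos_of_pos hs.1 (-(3/2) : ℝ)
  have := Real.rpow_pos_of_pos hs1 (-(3/2) : ℝ)
  unfold Qf; nlinarith

private lemma aux_div {c t : ℝ} (hc : 0 < c) (ht : 0 < t) :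
    (t / c) ^ (-(5/3) : ℝ) / c = c ^ (2/3 : ℝ) / t ^ (5/3 : ℝ) := by
  have h53 : c ^ (5/3:ℝ) = c * c ^ (2/3:ℝ) := by
    rw [← Real.rpow_one_add' hc.le (by norm_num)]; norm_num
  have ht5 : (0:ℝ) < t ^ (5/3:ℝ) := Real.rpow_pos_of_pos ht _
  have hc5 : (0:ℝ) < c ^ (5/3:ℝ) := Real.rpow_pos_of_pos hc _
  rw [Real.rpow_neg (by positivity), Real.div_rpow ht.le hc.le]
  rw [h53] at *
  field_simp

private lemma Ff_deriv_pos {x y s : ℝ} (hx : 0 < x) (hxy : x < y) (hs : s ∈ Ioo (0:ℝ) 1)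
    (hPs : 0 < Pf x y s) : ∃ d, 0 < d ∧ HasDerivAt (Ff x y) d s := by
  have hy : (0:ℝ) < y := hx.trans hxy
  have hQs := Qf_pos hx hxy hs
  have hs0 : (0:ℝ) < s := hs.1
  have hs1 : (0:ℝ) < 1 - s := by linarith [hs.2]
  have hA : 0 < Pf x y s / (2*x) := by positivity
  have hB : 0 < Qf x y s / (2*y) := by positivity
  have hdA : HasDerivAt (fun t => (Pf x y t / (2*x)) ^ (-(2/3):ℝ))
      (((x + y) * (-(3/2) * s ^ (-(5/2) : ℝ)) + (x - y) * ((3/2) * (1 - s) ^ (-(5/2) : ℝ))) / (2*x)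
        * (-(2/3)) * (Pf x y s / (2*x)) ^ ((-(2/3):ℝ) - 1)) s :=
    ((hasDerivAt_Pf hs).div_const _).rpow_const (Or.inl hA.ne')
  have hdB : HasDerivAt (fun t => (Qf x y t / (2*y)) ^ (-(2/3):ℝ))
      (((x + y) * (-(3/2) * s ^ (-(5/2) : ℝ)) + (y - x) * ((3/2) * (1 - s) ^ (-(5/2) : ℝ))) / (2*y)
        * (-(2/3)) * (Qf x y s / (2*y)) ^ ((-(2/3):ℝ) - 1)) s :=
    ((hasDerivAt_Qf hs).div_const _).rpow_const (Or.inl hB.ne')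
  refine ⟨_, ?_, hdA.add hdB⟩
  have hexp : ((-(2/3):ℝ) - 1) = -(5/3) := by norm_num
  rw [hexp]
  set u := s ^ (-(3/2):ℝ) with hu_def
  set v := (1 - s) ^ (-(3/2):ℝ) with hv_def
  have hu : 0 < u := Real.rpow_pos_of_pos hs0 _
  have hv : 0 < v := Real.rpow_pos_of_pos hs1 _
  have hsu : s ^ (-(5/2):ℝ) = u ^ (5/3:ℝ) := by
    rw [hu_def, ← Real.rpow_mul hs0.le] <;> norm_num
  have hsv : (1 - s) ^ (-(5/2):ℝ) = v ^ (5/3:ℝ) := by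
    rw [hv_def, ← Real.rpow_mul hs1.le] <;> norm_num
  rw [hsu, hsv]
  have hPuv : Pf x y s = (x + y) * u - (y - x) * v := by rw [Pf]; ring
  have hQuv : Qf x y s = (x + y) * u + (y - x) * v := by rw [Qf]
  have hP' : 0 < (x + y) * u - (y - x) * v := hPuv ▸ hPs
  have hQ' : 0 < (x + y) * u + (y - x) * v := hQuv ▸ hQs
  have hAdiv := aux_div (t := Pf x y s) (by positivity : (0:ℝ) < 2*x) hPs
  have hBdiv := aux_div (t := Qf x y s) (by positivity : (0:ℝ) < 2*y) hQs
  have hue : (0:ℝ) < u ^ (5/3:ℝ) := Real.rpow_pos_of_pos hu _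
  have hve : (0:ℝ) < v ^ (5/3:ℝ) := Real.rpow_pos_of_pos hv _
  have hP5 : (0:ℝ) < (Pf x y s) ^ (5/3:ℝ) := Real.rpow_pos_of_pos hPs _
  have hQ5 : (0:ℝ) < (Qf x y s) ^ (5/3:ℝ) := Real.rpow_pos_of_pos hQs _
  set a := (x + y) * u ^ (5/3:ℝ) with ha_def
  set b := (y - x) * v ^ (5/3:ℝ) with hb_def
  have ha : 0 < a := by rw [ha_def]; positivity
  have hb : 0 < b := by rw [hb_def]; nlinarith
  have key := key_ineq hx hxy hu hv hP'
  rw [← hPuv, ← hQuv] at key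
  have h2 : (0:ℝ) < (2:ℝ) ^ (2/3:ℝ) := by positivity
  have h2x : ((2:ℝ)*x) ^ (2/3:ℝ) = (2:ℝ)^(2/3:ℝ) * x ^ (2/3:ℝ) := Real.mul_rpow (by norm_num) hx.le
  have h2y : ((2:ℝ)*y) ^ (2/3:ℝ) = (2:ℝ)^(2/3:ℝ) * y ^ (2/3:ℝ) := Real.mul_rpow (by norm_num) hy.le
  have key2 : (b - a) * (((2*y) ^ (2/3:ℝ)) / (Qf x y s) ^ (5/3:ℝ))
      < (a + b) * (((2*x) ^ (2/3:ℝ)) / (Pf x y s) ^ (5/3:ℝ)) := by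
    rw [← ha_def, ← hb_def] at key
    rw [mul_div_assoc', mul_div_assoc', div_lt_div_iff₀ hQ5 hP5, h2x, h2y]
    calc (b - a) * (2 ^ (2/3:ℝ) * y ^ (2/3:ℝ)) * Pf x y s ^ (5/3:ℝ)
        = 2 ^ (2/3:ℝ) * ((b - a) * (y ^ (2/3:ℝ) * Pf x y s ^ (5/3:ℝ))) := by ring
      _ < 2 ^ (2/3:ℝ) * ((a + b) * (x ^ (2/3:ℝ) * Qf x y s ^ (5/3:ℝ))) :=
          mul_lt_mul_of_pos_left key h2
      _ = (a + b) * (2 ^ (2/3:ℝ) * x ^ (2/3:ℝ)) * Qf x y s ^ (5/3:ℝ) := by ring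
  have hx2 : (2*x) ≠ 0 := by positivity
  have hy2 : (2*y) ≠ 0 := by positivity
  have hT1 : (Pf x y s/(2*x)) ^ (-(5/3):ℝ) = (2*x) * ((2*x)^(2/3:ℝ)/(Pf x y s)^(5/3:ℝ)) := by
    rw [← hAdiv]; field_simp
  have hT2 : (Qf x y s/(2*y)) ^ (-(5/3):ℝ) = (2*y) * ((2*y)^(2/3:ℝ)/(Qf x y s)^(5/3:ℝ)) := by
    rw [← hBdiv]; field_simp
  rw [hT1, hT2]
  have cancelA : ((x+y) * (-(3/2) * u^(5/3:ℝ)) + (x-y)*((3/2) * v^(5/3:ℝ)))/(2*x) * (-(2/3))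
      * ((2*x) * ((2*x)^(2/3:ℝ)/(Pf x y s)^(5/3:ℝ)))
      = (a+b) * ((2*x)^(2/3:ℝ)/(Pf x y s)^(5/3:ℝ)) := by
    rw [ha_def, hb_def]; field_simp; ring
  have cancelB : ((x+y) * (-(3/2) * u^(5/3:ℝ)) + (y-x)*((3/2) * v^(5/3:ℝ)))/(2*y) * (-(2/3))
      * ((2*y) * ((2*y)^(2/3:ℝ)/(Qf x y s)^(5/3:ℝ)))
      = -((b-a) * ((2*y)^(2/3:ℝ)/(Qf x y s)^(5/3:ℝ))) := by
    rw [ha_def, hb_def]; field_simp; ring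
  rw [cancelA, cancelB]
  linarith [key2]

private lemma Pf_strictAntiOn {x y : ℝ} (hx : 0 < x) (hxy : x < y) :
    StrictAntiOn (Pf x y) (Ioo 0 1) := by
  apply strictAntiOn_of_deriv_neg (convex_Ioo 0 1)
  · exact fun s hs => (hasDerivAt_Pf hs).continuousAt.continuousWithinAt
  · intro s hs
    rw [interior_Ioo] at hs
    rw [(hasDerivAt_Pf hs).deriv]
    have h1 := Real.rpow_pos_of_pos hs.1 (-(5/2) : ℝ)
    have h2 := Real.rpow_pos_of_pos (by linarith [hs.2] : (0:ℝ) < 1 - s) (-(5/2) : ℝ)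
    nlinarith

private lemma Ff_lt {x y s1 s2 : ℝ} (hx : 0 < x) (hxy : x < y) (h1 : s1 ∈ Ioo (0:ℝ) 1)
    (h2 : s2 ∈ Ioo (0:ℝ) 1) (h12 : s1 < s2) (hP2 : 0 < Pf x y s2) :
    Ff x y s1 < Ff x y s2 := by
  have hPall : ∀ s ∈ Icc s1 s2, 0 < Pf x y s := by
    intro s hs
    have hsIoo : s ∈ Ioo (0:ℝ) 1 := ⟨lt_of_lt_of_le h1.1 hs.1, lt_of_le_of_lt hs.2 h2.2⟩
    rcases eq_or_lt_of_le hs.2 with h | h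
    · rwa [h]
    · exact hP2.trans (Pf_strictAntiOn hx hxy hsIoo h2 h)
  have mono : StrictMonoOn (Ff x y) (Icc s1 s2) := by
    apply strictMonoOn_of_deriv_pos (convex_Icc s1 s2)
    · intro s hs
      have hsIoo : s ∈ Ioo (0:ℝ) 1 := ⟨lt_of_lt_of_le h1.1 hs.1, lt_of_le_of_lt hs.2 h2.2⟩
      obtain ⟨d, _, hdd⟩ := Ff_deriv_pos hx hxy hsIoo (hPall s hs)
      exact hdd.continuousAt.continuousWithinAt
    · intro s hs
      rw [interior_Icc] at hs
      have hsIoo : s ∈ Ioo (0:ℝ) 1 := ⟨lt_of_lt_of_le h1.1 hs.1.le, lt_of_le_of_lt hs.2.le h2.2⟩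
      obtain ⟨d, hd, hdd⟩ := Ff_deriv_pos hx hxy hsIoo (hPall s (Ioo_subset_Icc_self hs))
      rw [hdd.deriv]; exact hd
  exact mono (left_mem_Icc.mpr h12.le) (right_mem_Icc.mpr h12.le) h12

private lemma num_half : ((1/2 : ℝ)) ^ (-(3/2):ℝ) ≤ 3 := by
  have ht0 : (0:ℝ) ≤ (1/2 : ℝ) ^ (-(3/2):ℝ) := (Real.rpow_pos_of_pos (by norm_num) _).le
  have ht2 : ((1/2 : ℝ) ^ (-(3/2):ℝ)) ^ (2:ℕ) = 8 := by
    rw [← Real.rpow_natCast ((1/2:ℝ) ^ (-(3/2):ℝ)) 2, ← Real.rpow_mul (by norm_num : (0:ℝ) ≤ 1/2)]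
    rw [show (-(3/2) * ((2:ℕ):ℝ) : ℝ) = ((-3 : ℤ) : ℝ) by push_cast; ring, Real.rpow_intCast]
    norm_num
  nlinarith

private lemma num_quarter : (2:ℝ) < ((1/4 : ℝ)) ^ (-(2/3):ℝ) := by
  have ht0 : (0:ℝ) ≤ (1/4 : ℝ) ^ (-(2/3):ℝ) := (Real.rpow_pos_of_pos (by norm_num) _).le
  have ht3 : ((1/4 : ℝ) ^ (-(2/3):ℝ)) ^ (3:ℕ) = 16 := by
    rw [← Real.rpow_natCast ((1/4:ℝ) ^ (-(2/3):ℝ)) 3, ← Real.rpow_mul (by norm_num : (0:ℝ) ≤ 1/4)]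
    rw [show (-(2/3) * ((3:ℕ):ℝ) : ℝ) = ((-2 : ℤ) : ℝ) by push_cast; ring, Real.rpow_intCast]
    norm_num
  by_contra h
  push_neg at h
  have := pow_le_pow_left₀ ht0 h 3
  norm_num [ht3] at this

private lemma rpow_neg23_lt_one {A : ℝ} (hA : 1 < A) : A ^ (-(2/3):ℝ) < 1 := by
  rw [Real.rpow_neg (by linarith)]
  have h1 : (1:ℝ) < A ^ ((2/3):ℝ) :=
    (Real.one_lt_rpow_iff_of_pos (by linarith)).mpr (Or.inl ⟨hA, by norm_num⟩)
  exact inv_lt_one_of_one_lt₀ h1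

private lemma exists_root {x y : ℝ} (hx : 0 < x) (hxy : x < y) :
    ∃ s ∈ Ioo (0:ℝ) 1, 0 < Pf x y s ∧ Ff x y s = 2 := by
  have hy : (0:ℝ) < y := hx.trans hxy
  set C : ℝ := (6*y+1)/(x+y) with hC_def
  have hCpos : 0 < C := by positivity
  have hCxy : (x+y) * C = 6*y+1 := by
    rw [hC_def]; field_simp
  set sa : ℝ := min (1/2) (C ^ (-(2/3):ℝ)) with hsa_def
  have hsa0 : 0 < sa := lt_min (by norm_num) (Real.rpow_pos_of_pos hCpos _)
  have hsa2 : sa ≤ 1/2 := min_le_left _ _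
  have hsaIoo : sa ∈ Ioo (0:ℝ) 1 := ⟨hsa0, by linarith⟩
  have hCe : (C ^ (-(2/3):ℝ)) ^ (-(3/2):ℝ) = C := by
    rw [← Real.rpow_mul hCpos.le]; norm_num
  have hu_sa : C ≤ sa ^ (-(3/2):ℝ) := by
    have := rpow_neg_anti hsa0 (min_le_right (1/2) (C ^ (-(2/3):ℝ))) (by norm_num : (0:ℝ) ≤ 3/2)
    rwa [hCe] at this
  have hv_sa : (1 - sa) ^ (-(3/2):ℝ) ≤ 3 := by
    have h := rpow_neg_anti (by norm_num : (0:ℝ) < 1/2) (by linarith : (1/2:ℝ) ≤ 1 - sa)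
      (by norm_num : (0:ℝ) ≤ 3/2)
    exact h.trans num_half
  have hva0 : 0 < (1 - sa) ^ (-(3/2):ℝ) := Real.rpow_pos_of_pos (by linarith [hsaIoo.2]) _
  have hPsa : 3*y + 1 ≤ Pf x y sa := by
    have h1 : 6*y+1 ≤ (x+y) * (sa ^ (-(3/2):ℝ)) := by
      have := mul_le_mul_of_nonneg_left hu_sa (by positivity : (0:ℝ) ≤ x+y)
      linarith [hCxy]
    have h2 : (x-y) * 3 ≤ (x-y) * ((1 - sa) ^ (-(3/2):ℝ)) :=
      mul_le_mul_of_nonpos_left hv_sa (by linarith : x - y ≤ 0)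
    unfold Pf; linarith
  have hPsa_pos : 0 < Pf x y sa := by linarith
  have hQsa : 2*y < Qf x y sa := by
    have h1 : 6*y+1 ≤ (x+y) * (sa ^ (-(3/2):ℝ)) := by
      have := mul_le_mul_of_nonneg_left hu_sa (by positivity : (0:ℝ) ≤ x+y)
      linarith [hCxy]
    have h2 : 0 ≤ (y-x) * ((1 - sa) ^ (-(3/2):ℝ)) := mul_nonneg (by linarith) hva0.le
    unfold Qf; linarith
  have hFsa : Ff x y sa < 2 := by
    have hA1 : 1 < Pf x y sa / (2*x) := by rw [lt_div_iff₀ (by positivity)]; linarith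
    have hB1 : 1 < Qf x y sa / (2*y) := by rw [lt_div_iff₀ (by positivity)]; linarith
    have := rpow_neg23_lt_one hA1
    have := rpow_neg23_lt_one hB1
    unfold Ff; linarith
  -- point where Pf is negative
  set D : ℝ := (3*(x+y)+1)/(y-x) with hD_def
  have hyx : (0:ℝ) < y - x := by linarith
  have hDpos : 0 < D := by positivity
  have hDxy : (y-x) * D = 3*(x+y)+1 := by
    rw [hD_def]; field_simp
  set sc : ℝ := max (1/2) (1 - D ^ (-(2/3):ℝ)) with hsc_def
  have hsc2 : (1/2:ℝ) ≤ sc := le_max_left _ _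
  have hDe0 : 0 < D ^ (-(2/3):ℝ) := Real.rpow_pos_of_pos hDpos _
  have hsc1 : sc < 1 := max_lt (by norm_num) (by linarith)
  have h1sc : 0 < 1 - sc := by linarith
  have h1sc_le : 1 - sc ≤ D ^ (-(2/3):ℝ) := by
    have := le_max_right (1/2:ℝ) (1 - D ^ (-(2/3):ℝ)); linarith
  have hDe : (D ^ (-(2/3):ℝ)) ^ (-(3/2):ℝ) = D := by
    rw [← Real.rpow_mul hDpos.le]; norm_num
  have hv_sc : D ≤ (1 - sc) ^ (-(3/2):ℝ) := by
    have := rpow_neg_anti h1sc h1sc_le (by norm_num : (0:ℝ) ≤ 3/2)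
    rwa [hDe] at this
  have hu_sc : sc ^ (-(3/2):ℝ) ≤ 3 := by
    have h := rpow_neg_anti (by norm_num : (0:ℝ) < 1/2) hsc2 (by norm_num : (0:ℝ) ≤ 3/2)
    exact h.trans num_half
  have hu_sc0 : 0 < sc ^ (-(3/2):ℝ) := Real.rpow_pos_of_pos (by linarith) _
  have hPsc : Pf x y sc ≤ -1 := by
    have h2 : 3*(x+y)+1 ≤ (y-x) * ((1 - sc) ^ (-(3/2):ℝ)) := by
      have := mul_le_mul_of_nonneg_left hv_sc (by linarith : (0:ℝ) ≤ y-x)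
      linarith [hDxy]
    have h1 : (x+y) * (sc ^ (-(3/2):ℝ)) ≤ 3*(x+y) := by
      have := mul_le_mul_of_nonneg_left hu_sc (by positivity : (0:ℝ) ≤ x+y)
      linarith
    unfold Pf; linarith
  have hsasc : sa ≤ sc := hsa2.trans hsc2
  have hsubIoo : Icc sa sc ⊆ Ioo (0:ℝ) 1 := fun s hs =>
    ⟨lt_of_lt_of_le hsa0 hs.1, lt_of_le_of_lt hs.2 hsc1⟩
  have contP : ContinuousOn (Pf x y) (Icc sa sc) := fun s hs =>
    (hasDerivAt_Pf (hsubIoo hs)).continuousAt.continuousWithinAt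
  set ε : ℝ := min (x/2) (Pf x y sa / 2) with hε_def
  have hε0 : 0 < ε := lt_min (by positivity) (by linarith)
  have hεx : ε ≤ x/2 := min_le_left _ _
  have hmem : ε ∈ Icc (Pf x y sc) (Pf x y sa) :=
    ⟨by linarith, le_trans (min_le_right _ _) (by linarith)⟩
  obtain ⟨sb, hsb, hPsb⟩ := intermediate_value_Icc' hsasc contP hmem
  have hsbIoo : sb ∈ Ioo (0:ℝ) 1 := hsubIoo hsb
  have hPsb_pos : 0 < Pf x y sb := by rw [hPsb]; exact hε0
  have hFsb : 2 < Ff x y sb := by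
    have hA : Pf x y sb / (2*x) ≤ 1/4 := by
      rw [div_le_iff₀ (by positivity), hPsb]; linarith
    have hA0 : 0 < Pf x y sb / (2*x) := by positivity
    have h1 : ((1/4:ℝ)) ^ (-(2/3):ℝ) ≤ (Pf x y sb / (2*x)) ^ (-(2/3):ℝ) :=
      rpow_neg_anti hA0 hA (by norm_num)
    have h2 : 0 < (Qf x y sb / (2*y)) ^ (-(2/3):ℝ) :=
      Real.rpow_pos_of_pos (div_pos (Qf_pos hx hxy hsbIoo) (by positivity)) _
    have := num_quarter
    unfold Ff; linarith
  have hsasb : sa ≤ sb := hsb.1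
  have hPposIcc : ∀ s ∈ Icc sa sb, 0 < Pf x y s := by
    intro s hs
    have hsIoo : s ∈ Ioo (0:ℝ) 1 := ⟨lt_of_lt_of_le hsa0 hs.1, lt_of_le_of_lt hs.2 hsbIoo.2⟩
    rcases eq_or_lt_of_le hs.2 with h | h
    · rwa [h]
    · exact hPsb_pos.trans (Pf_strictAntiOn hx hxy hsIoo hsbIoo h)
  have contF : ContinuousOn (Ff x y) (Icc sa sb) := by
    intro s hs
    have hsIoo : s ∈ Ioo (0:ℝ) 1 := ⟨lt_of_lt_of_le hsa0 hs.1, lt_of_le_of_lt hs.2 hsbIoo.2⟩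
    obtain ⟨d, _, hdd⟩ := Ff_deriv_pos hx hxy hsIoo (hPposIcc s hs)
    exact hdd.continuousAt.continuousWithinAt
  have h2mem : (2:ℝ) ∈ Icc (Ff x y sa) (Ff x y sb) := ⟨hFsa.le, hFsb.le⟩
  obtain ⟨s0, hs0, hFs0⟩ := intermediate_value_Icc hsasb contF h2mem
  exact ⟨s0, ⟨lt_of_lt_of_le hsa0 hs0.1, lt_of_le_of_lt hs0.2 hsbIoo.2⟩,
    hPposIcc s0 hs0, hFs0⟩

private lemma Ff_uniq {x y s1 s2 : ℝ} (hx : 0 < x) (hxy : x < y) (h1 : s1 ∈ Ioo (0:ℝ) 1)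
    (h2 : s2 ∈ Ioo (0:ℝ) 1) (hP1 : 0 < Pf x y s1) (hP2 : 0 < Pf x y s2)
    (hF1 : Ff x y s1 = 2) (hF2 : Ff x y s2 = 2) : s1 = s2 := by
  rcases lt_trichotomy s1 s2 with h | h | h
  · exact absurd (hF1 ▸ hF2 ▸ Ff_lt hx hxy h1 h2 h hP2) (lt_irrefl 2)
  · exact h
  · exact absurd (hF2 ▸ hF1 ▸ Ff_lt hx hxy h2 h1 h hP1) (lt_irrefl 2)

/-- For 0 < x < y, the system arising from central configurations with vanishing
multiplier for masses x, -x, y, -y, namely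
u⁻²ᐟ³ + v⁻²ᐟ³ = 1 and
(((x+y)u + (x-y)v)/(2x))⁻²ᐟ³ + (((x+y)u + (y-x)v)/(2y))⁻²ᐟ³ = 2,
has exactly one solution (u, v) with u, v > 0 and (x+y)u + (x-y)v > 0. -/
theorem zero_multiplier_system_unique_solution (x y : ℝ) (hx : 0 < x) (hxy : x < y) :
    ∃! p : ℝ × ℝ,
      0 < p.1 ∧ 0 < p.2 ∧ 0 < (x + y) * p.1 + (x - y) * p.2 ∧
      p.1 ^ (-(2 / 3 : ℝ)) + p.2 ^ (-(2 / 3 : ℝ)) = 1 ∧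
      (((x + y) * p.1 + (x - y) * p.2) / (2 * x)) ^ (-(2 / 3 : ℝ)) +
        (((x + y) * p.1 + (y - x) * p.2) / (2 * y)) ^ (-(2 / 3 : ℝ)) = 2 := by
  obtain ⟨s0, hs0Ioo, hPs0, hFs0⟩ := exists_root hx hxy
  have hs00 : (0:ℝ) < s0 := hs0Ioo.1
  have hs01 : (0:ℝ) < 1 - s0 := by linarith [hs0Ioo.2]
  refine ⟨(s0 ^ (-(3/2):ℝ), (1 - s0) ^ (-(3/2):ℝ)), ⟨?_, ?_, ?_, ?_, ?_⟩, ?_⟩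
  · exact Real.rpow_pos_of_pos hs00 _
  · exact Real.rpow_pos_of_pos hs01 _
  · exact hPs0
  · have e1 : (s0 ^ (-(3/2):ℝ)) ^ (-(2/3):ℝ) = s0 := by
      rw [← Real.rpow_mul hs00.le]
      norm_num
    have e2 : ((1 - s0) ^ (-(3/2):ℝ)) ^ (-(2/3):ℝ) = 1 - s0 := by
      rw [← Real.rpow_mul hs01.le]
      norm_num
    show (s0 ^ (-(3/2):ℝ)) ^ (-(2/3:ℝ)) + ((1 - s0) ^ (-(3/2):ℝ)) ^ (-(2/3:ℝ)) = 1
    rw [show (-(2/3:ℝ)) = (-(2/3):ℝ) by norm_num] at *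
    rw [e1, e2]; ring
  · exact hFs0
  · rintro ⟨u, v⟩ ⟨hu, hv, hP, heq1, heq2⟩
    simp only at hu hv hP heq1 heq2 ⊢
    set s : ℝ := u ^ (-(2/3):ℝ) with hs_def
    have hs0 : 0 < s := Real.rpow_pos_of_pos hu _
    have hvpow : 0 < v ^ (-(2/3):ℝ) := Real.rpow_pos_of_pos hv _
    have h1s : 1 - s = v ^ (-(2/3):ℝ) := by
      rw [hs_def]
      rw [show (-(2/3):ℝ) = (-(2 / 3 : ℝ)) by norm_num]
      linarith [heq1]
    have hs1 : s < 1 := by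
      have : 0 < 1 - s := h1s ▸ hvpow
      linarith
    have hsIoo : s ∈ Ioo (0:ℝ) 1 := ⟨hs0, hs1⟩
    have hueq : s ^ (-(3/2):ℝ) = u := by
      rw [hs_def, ← Real.rpow_mul hu.le]
      norm_num
    have hveq : (1 - s) ^ (-(3/2):ℝ) = v := by
      rw [h1s, ← Real.rpow_mul hv.le]
      norm_num
    have hPf : Pf x y s = (x + y) * u + (x - y) * v := by
      rw [Pf, hueq, hveq]
    have hPpos : 0 < Pf x y s := by rw [hPf]; exact hP
    have hFf : Ff x y s = 2 := by
      rw [Ff, hPf]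
      have hQf : Qf x y s = (x + y) * u + (y - x) * v := by
        rw [Qf, hueq, hveq]
      rw [hQf]
      exact heq2
    have hss0 : s = s0 := Ff_uniq hx hxy hsIoo hs0Ioo hPpos hPs0 hFf hFs0
    rw [← hueq, ← hveq, hss0]
end

section
/- Consider N pairwise distinct points r₁,…,r_N in the Euclidean plane with nonzero real masses m₁,…,m_N whose sum vanishes: m₁ + ⋯ + m_N = 0. If the configuration is central with multiplier ξ, then ξ·λ = 0, where λ = m₁ r₁ + ⋯ + m_N r_N is the vector of inertia. In particular, a central configuration with vanishing total mass has ξ = 0 or λ = 0. -/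
/-- The gravitational acceleration of body `i` in a planar `N`-body configuration
with masses `m` and positions `r`. -/
noncomputable def accel {N : ℕ} (m : Fin N → ℝ) (r : Fin N → EuclideanSpace ℝ (Fin 2))
    (i : Fin N) : EuclideanSpace ℝ (Fin 2) :=
  ∑ j ∈ Finset.univ.erase i, (m j / ‖r j - r i‖ ^ 3) • (r j - r i)

/-- The configuration is central with multiplier `ξ`:
`γ_j - γ_i = ξ • (r_j - r_i)` for all `i`, `j`. -/
def IsCentral {N : ℕ} (m : Fin N → ℝ) (r : Fin N → EuclideanSpace ℝ (Fin 2)) (ξ : ℝ) : Prop :=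
  ∀ i j, accel m r j - accel m r i = ξ • (r j - r i)

/-- For any planar central configuration of N bodies whose (nonzero) masses sum to
zero, the multiplier annihilates the vector of inertia λ = Σ mᵢ rᵢ; in particular the
multiplier vanishes or the vector of inertia vanishes. -/
theorem central_config_vanishing_total_mass_inertia
    (N : ℕ) (m : Fin N → ℝ) (r : Fin N → EuclideanSpace ℝ (Fin 2))
    (hm : ∀ i, m i ≠ 0) (hinj : Function.Injective r)
    (hsum : ∑ i, m i = 0) (ξ : ℝ) (hc : IsCentral m r ξ) :
    ξ • (∑ i, m i • r i) = 0 ∧ (ξ = 0 ∨ ∑ i, m i • r i = 0) := by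
  have key : ξ • (∑ i, m i • r i) = 0 := by
    rcases Nat.eq_zero_or_pos N with h0 | hN
    · subst h0; simp
    · set F : Fin N → Fin N → EuclideanSpace ℝ (Fin 2) :=
        fun j k => (m j * (m k / ‖r k - r j‖ ^ 3)) • (r k - r j) with hF
      have hanti : ∀ j k, F k j = -F j k := by
        intro j k
        simp only [hF]
        have hs : m k * (m j / ‖r j - r k‖ ^ 3) = m j * (m k / ‖r k - r j‖ ^ 3) := by
          rw [norm_sub_rev]; ring
        rw [hs, ← smul_neg, neg_sub]
      -- each weighted acceleration is a full sum
      have h1 : ∀ j, m j • accel m r j = ∑ k, F j k := by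
        intro j
        rw [accel, Finset.smul_sum]
        rw [← Finset.sum_erase (Finset.univ) (f := fun k => F j k) (a := j)
          (by simp [hF])]
        refine Finset.sum_congr rfl fun k _ => ?_
        rw [hF, smul_smul]
      -- total weighted acceleration vanishes by antisymmetry
      have S0 : ∑ j, m j • accel m r j = 0 := by
        have hS : (∑ j, ∑ k, F j k) = -(∑ j, ∑ k, F j k) := by
          conv_lhs => rw [Finset.sum_comm]
          rw [← Finset.sum_neg_distrib]
          refine Finset.sum_congr rfl fun k _ => ?_
          rw [← Finset.sum_neg_distrib]
          exact Finset.sum_congr rfl fun j _ => hanti k j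
        have h2 : (∑ j, ∑ k, F j k) + (∑ j, ∑ k, F j k) = 0 := by
          nth_rewrite 1 [hS]; simp
        have h3 : (2 : ℝ) • (∑ j, ∑ k, F j k) = 0 := by
          rw [two_smul]; exact h2
        have h4 : (∑ j, ∑ k, F j k) = 0 := by
          rcases smul_eq_zero.mp h3 with h | h
          · norm_num at h
          · exact h
        simp_rw [h1]; exact h4
      -- centrality: γ_j = γ_i + ξ • (r j - r i)
      set i : Fin N := ⟨0, hN⟩
      have h5 : ∀ j, accel m r j = accel m r i + ξ • (r j - r i) := by
        intro j
        have := hc i j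
        linear_combination (norm := module) this
      calc ξ • (∑ j, m j • r j)
          = ∑ j, m j • (accel m r i + ξ • (r j - r i)) := by
            have e : ∀ j, m j • (accel m r i + ξ • (r j - r i))
                = m j • accel m r i + ξ • (m j • r j) - m j • (ξ • r i) := by
              intro j; module
            simp_rw [e]
            rw [Finset.sum_sub_distrib, Finset.sum_add_distrib, ← Finset.sum_smul, hsum,
              zero_smul, zero_add, ← Finset.smul_sum, ← Finset.sum_smul, hsum, zero_smul,
              sub_zero]
        _ = ∑ j, m j • accel m r j := by
            refine Finset.sum_congr rfl fun j _ => ?_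
            rw [h5 j]
        _ = 0 := S0
  exact ⟨key, smul_eq_zero.mp key⟩
end

section
/- Let r₁, r₂, r₃, r₄ be pairwise distinct points in the Euclidean plane, not all on one line, and let m₁, m₂, m₃, m₄ be nonzero real masses with m₁ + m₂ + m₃ + m₄ = 0 and m₁r₁ + m₂r₂ + m₃r₃ + m₄r₄ = 0. Then the configuration is central (for some multiplier ξ ∈ ℝ) if and only if the mutual distances satisfy 1/‖r₂−r₁‖³ + 1/‖r₄−r₃‖³ = 1/‖r₃−r₁‖³ + 1/‖r₄−r₂‖³ = 1/‖r₃−r₂‖³ + 1/‖r₄−r₁‖³. -/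
set_option maxHeartbeats 2000000 in
/-- A planar non-collinear four-body configuration with nonzero masses of vanishing
sum and vanishing vector of inertia is central (for some multiplier) if and only if
the mutual distances satisfy
1/r₁₂³ + 1/r₃₄³ = 1/r₁₃³ + 1/r₂₄³ = 1/r₂₃³ + 1/r₁₄³. -/
theorem central_iff_distance_identity_of_vanishing_inertia
    (r : Fin 4 → EuclideanSpace ℝ (Fin 2)) (m : Fin 4 → ℝ)
    (hinj : Function.Injective r)
    (hnc : ¬ Collinear ℝ (Set.range r))
    (hm : ∀ i, m i ≠ 0)
    (hsum : ∑ i, m i = 0)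
    (hlam : ∑ i, m i • r i = 0) :
    (∃ ξ : ℝ, IsCentral m r ξ) ↔
      (1 / ‖r 1 - r 0‖ ^ 3 + 1 / ‖r 3 - r 2‖ ^ 3
          = 1 / ‖r 2 - r 0‖ ^ 3 + 1 / ‖r 3 - r 1‖ ^ 3 ∧
       1 / ‖r 2 - r 0‖ ^ 3 + 1 / ‖r 3 - r 1‖ ^ 3
          = 1 / ‖r 2 - r 1‖ ^ 3 + 1 / ‖r 3 - r 0‖ ^ 3) := by
  set s01 : ℝ := 1 / ‖r 1 - r 0‖ ^ 3 with hs01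
  set s02 : ℝ := 1 / ‖r 2 - r 0‖ ^ 3 with hs02
  set s03 : ℝ := 1 / ‖r 3 - r 0‖ ^ 3 with hs03
  set s12 : ℝ := 1 / ‖r 2 - r 1‖ ^ 3 with hs12
  set s13 : ℝ := 1 / ‖r 3 - r 1‖ ^ 3 with hs13
  set s23 : ℝ := 1 / ‖r 3 - r 2‖ ^ 3 with hs23
  have key : ∀ i, accel m r i = ∑ j : Fin 4, (m j / ‖r j - r i‖ ^ 3) • (r j - r i) := by
    intro i; unfold accel; exact Finset.sum_erase _ (by simp)
  have ha0 : accel m r 0 = (m 1 * s01) • (r 1 - r 0)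
      + (m 2 * s02) • (r 2 - r 0) + (m 3 * s03) • (r 3 - r 0) := by
    rw [key 0, Fin.sum_univ_four, hs01, hs02, hs03]; module
  have ha1 : accel m r 1 = (m 0 * s01) • (r 0 - r 1)
      + (m 2 * s12) • (r 2 - r 1) + (m 3 * s13) • (r 3 - r 1) := by
    rw [key 1, Fin.sum_univ_four, norm_sub_rev (r 0) (r 1), hs01, hs12, hs13]; module
  have ha2 : accel m r 2 = (m 0 * s02) • (r 0 - r 2)
      + (m 1 * s12) • (r 1 - r 2) + (m 3 * s23) • (r 3 - r 2) := by
    rw [key 2, Fin.sum_univ_four, norm_sub_rev (r 0) (r 2), norm_sub_rev (r 1) (r 2),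
      hs02, hs12, hs23]; module
  have ha3 : accel m r 3 = (m 0 * s03) • (r 0 - r 3)
      + (m 1 * s13) • (r 1 - r 3) + (m 2 * s23) • (r 2 - r 3) := by
    rw [key 3, Fin.sum_univ_four, norm_sub_rev (r 0) (r 3), norm_sub_rev (r 1) (r 3),
      norm_sub_rev (r 2) (r 3), hs03, hs13, hs23]; module
  have hrel : m 1 • (r 1 - r 0) + m 2 • (r 2 - r 0) + m 3 • (r 3 - r 0) = 0 := by
    rw [Fin.sum_univ_four] at hlam hsum
    have h : m 1 • (r 1 - r 0) + m 2 • (r 2 - r 0) + m 3 • (r 3 - r 0)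
        = (m 0 • r 0 + m 1 • r 1 + m 2 • r 2 + m 3 • r 3)
          - (m 0 + m 1 + m 2 + m 3) • r 0 := by module
    rw [h, hlam, hsum, zero_smul, sub_zero]
  have hindep : ∀ a b : ℝ, a • (r 1 - r 0) + b • (r 2 - r 0) = 0 → a = 0 ∧ b = 0 := by
    intro a b hab
    by_contra hcon
    rw [not_and_or] at hcon
    apply hnc
    rw [collinear_iff_exists_forall_eq_smul_vadd]
    rcases hcon with ha | hb
    · push_neg at ha
      have hu : r 1 - r 0 = (-(b/a)) • (r 2 - r 0) := by
        have h2 : a • (r 1 - r 0) = (-b) • (r 2 - r 0) := by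
          linear_combination (norm := module) hab
        have h3 := congrArg (a⁻¹ • ·) h2
        simp only [inv_smul_smul₀ ha] at h3
        rw [h3]; match_scalars <;> ring
      have hw : r 3 - r 0 = ((-(m 1/m 3)) * (-(b/a)) + (-(m 2/m 3))) • (r 2 - r 0) := by
        have h2 : m 3 • (r 3 - r 0) = (-(m 1)) • (r 1 - r 0) + (-(m 2)) • (r 2 - r 0) := by
          linear_combination (norm := module) hrel
        have h3 := congrArg ((m 3)⁻¹ • ·) h2
        simp only [inv_smul_smul₀ (hm 3)] at h3
        rw [h3, hu]; match_scalars <;> field_simp [ha, hm 3] <;> ring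
      refine ⟨r 0, r 2 - r 0, ?_⟩
      rintro p ⟨i, rfl⟩
      fin_cases i
      · exact ⟨0, by simp⟩
      · exact ⟨-(b/a), by rw [← hu]; simp⟩
      · exact ⟨1, by simp⟩
      · exact ⟨(-(m 1/m 3)) * (-(b/a)) + (-(m 2/m 3)), by rw [← hw]; simp⟩
    · push_neg at hb
      have hv : r 2 - r 0 = (-(a/b)) • (r 1 - r 0) := by
        have h2 : b • (r 2 - r 0) = (-a) • (r 1 - r 0) := by
          linear_combination (norm := module) hab
        have h3 := congrArg (b⁻¹ • ·) h2
        simp only [inv_smul_smul₀ hb] at h3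
        rw [h3]; match_scalars <;> ring
      have hw : r 3 - r 0 = ((-(m 2/m 3)) * (-(a/b)) + (-(m 1/m 3))) • (r 1 - r 0) := by
        have h2 : m 3 • (r 3 - r 0) = (-(m 1)) • (r 1 - r 0) + (-(m 2)) • (r 2 - r 0) := by
          linear_combination (norm := module) hrel
        have h3 := congrArg ((m 3)⁻¹ • ·) h2
        simp only [inv_smul_smul₀ (hm 3)] at h3
        rw [h3, hv]; match_scalars <;> field_simp [hb, hm 3] <;> ring
      refine ⟨r 0, r 1 - r 0, ?_⟩
      rintro p ⟨i, rfl⟩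
      fin_cases i
      · exact ⟨0, by simp⟩
      · exact ⟨1, by simp⟩
      · exact ⟨-(a/b), by rw [← hv]; simp⟩
      · exact ⟨(-(m 2/m 3)) * (-(a/b)) + (-(m 1/m 3)), by rw [← hw]; simp⟩
  have huniq : ∀ α β γ : ℝ, α • (r 1 - r 0) + β • (r 2 - r 0) + γ • (r 3 - r 0) = 0 →
      ∃ t : ℝ, α = t * m 1 ∧ β = t * m 2 ∧ γ = t * m 3 := by
    intro α β γ h
    have h2 : (m 3 * α - γ * m 1) • (r 1 - r 0) + (m 3 * β - γ * m 2) • (r 2 - r 0) = 0 := by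
      linear_combination (norm := module) (m 3) • h - γ • hrel
    obtain ⟨e1, e2⟩ := hindep _ _ h2
    refine ⟨γ / m 3, ?_, ?_, ?_⟩
    · rw [div_mul_eq_mul_div, eq_div_iff (hm 3)]; linear_combination e1
    · rw [div_mul_eq_mul_div, eq_div_iff (hm 3)]; linear_combination e2
    · rw [div_mul_eq_mul_div, eq_div_iff (hm 3)]
  have hA1 : accel m r 1 - accel m r 0
      = (-(m 0 + m 1) * s01 - m 2 * s12 - m 3 * s13) • (r 1 - r 0)
        + (m 2 * (s12 - s02)) • (r 2 - r 0) + (m 3 * (s13 - s03)) • (r 3 - r 0) := by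
    rw [ha1, ha0]; module
  have hA2 : accel m r 2 - accel m r 0
      = (m 1 * (s12 - s01)) • (r 1 - r 0)
        + (-(m 0 + m 2) * s02 - m 1 * s12 - m 3 * s23) • (r 2 - r 0)
        + (m 3 * (s23 - s03)) • (r 3 - r 0) := by
    rw [ha2, ha0]; module
  have hA3 : accel m r 3 - accel m r 0
      = (m 1 * (s13 - s01)) • (r 1 - r 0)
        + (m 2 * (s23 - s02)) • (r 2 - r 0)
        + (-(m 0 + m 3) * s03 - m 1 * s13 - m 2 * s23) • (r 3 - r 0) := by
    rw [ha3, ha0]; module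
  have hm0 : m 0 = -(m 1 + m 2 + m 3) := by
    rw [Fin.sum_univ_four] at hsum; linarith
  clear_value s01 s02 s03 s12 s13 s23
  constructor
  · rintro ⟨ξ, hc⟩
    have h1 : (-(m 0 + m 1) * s01 - m 2 * s12 - m 3 * s13 - ξ) • (r 1 - r 0)
        + (m 2 * (s12 - s02)) • (r 2 - r 0) + (m 3 * (s13 - s03)) • (r 3 - r 0) = 0 := by
      have hc1 := hc 0 1
      rw [hA1] at hc1
      linear_combination (norm := module) hc1
    have h2 : (m 1 * (s12 - s01)) • (r 1 - r 0)
        + (-(m 0 + m 2) * s02 - m 1 * s12 - m 3 * s23 - ξ) • (r 2 - r 0)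
        + (m 3 * (s23 - s03)) • (r 3 - r 0) = 0 := by
      have hc2 := hc 0 2
      rw [hA2] at hc2
      linear_combination (norm := module) hc2
    obtain ⟨t, -, e1v, e1w⟩ := huniq _ _ _ h1
    obtain ⟨t', e2u, -, e2w⟩ := huniq _ _ _ h2
    have g1 : s12 - s02 = t := mul_left_cancel₀ (hm 2) (by linear_combination e1v)
    have g2 : s13 - s03 = t := mul_left_cancel₀ (hm 3) (by linear_combination e1w)
    have g3 : s12 - s01 = t' := mul_left_cancel₀ (hm 1) (by linear_combination e2u)
    have g4 : s23 - s03 = t' := mul_left_cancel₀ (hm 3) (by linear_combination e2w)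
    constructor
    · linarith
    · linarith
  · rintro ⟨hAB, hBC⟩
    have hAC : s01 + s23 = s12 + s03 := hAB.trans hBC
    refine ⟨m 2 * (s01 - s12) + m 3 * (s01 - s13) - (s12 - s02) * m 1, ?_⟩
    set ξ : ℝ := m 2 * (s01 - s12) + m 3 * (s01 - s13) - (s12 - s02) * m 1 with hξ
    have hS1 : accel m r 1 - accel m r 0 = ξ • (r 1 - r 0) := by
      rw [hA1]
      have hc_u : -(m 0 + m 1) * s01 - m 2 * s12 - m 3 * s13
          = ξ + (s12 - s02) * m 1 := by
        rw [hξ, hm0]; ring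
      have hc_v : m 2 * (s12 - s02) = (s12 - s02) * m 2 := by ring
      have hc_w : m 3 * (s13 - s03) = (s12 - s02) * m 3 := by
        linear_combination m 3 * hBC
      rw [hc_u, hc_v, hc_w]
      linear_combination (norm := module) (s12 - s02) • hrel
    have hS2 : accel m r 2 - accel m r 0 = ξ • (r 2 - r 0) := by
      rw [hA2]
      have hc_u : m 1 * (s12 - s01) = (s12 - s01) * m 1 := by ring
      have hc_v : -(m 0 + m 2) * s02 - m 1 * s12 - m 3 * s23
          = ξ + (s12 - s01) * m 2 := by
        rw [hξ, hm0]; linear_combination (-(m 3)) * hAB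
      have hc_w : m 3 * (s23 - s03) = (s12 - s01) * m 3 := by
        linear_combination m 3 * hAC
      rw [hc_u, hc_v, hc_w]
      linear_combination (norm := module) (s12 - s01) • hrel
    have hS3 : accel m r 3 - accel m r 0 = ξ • (r 3 - r 0) := by
      rw [hA3]
      have hc_u : m 1 * (s13 - s01) = (s13 - s01) * m 1 := by ring
      have hc_v : m 2 * (s23 - s02) = (s13 - s01) * m 2 := by
        linear_combination m 2 * hAB
      have hc_w : -(m 0 + m 3) * s03 - m 1 * s13 - m 2 * s23
          = ξ + (s13 - s01) * m 3 := by
        rw [hξ, hm0]; linear_combination (-(m 1)) * hBC - m 2 * hAC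
      rw [hc_u, hc_v, hc_w]
      linear_combination (norm := module) (s13 - s01) • hrel
    have hS : ∀ k, accel m r k - accel m r 0 = ξ • (r k - r 0) := by
      intro k
      fin_cases k
      · simp
      · exact hS1
      · exact hS2
      · exact hS3
    intro i j
    linear_combination (norm := module) hS j - hS i
end

section
/- Let x and y be nonzero real numbers, and let (r₁, r₂, r₃, r₄) be a planar non-collinear central configuration with multiplier ξ ≠ 0 for the masses (x, −x, y, −y) (masses x, −x, y, −y at r₁, r₂, r₃, r₄ respectively). Then x(r₂ − r₁) = y(r₃ − r₄); in particular the configuration is a trapezoid: the segments [r₁, r₂] and [r₃, r₄] are parallel, with length ratio ‖r₂ − r₁‖/‖r₃ − r₄‖ = |y|/|x|. -/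
/-!
Newton's third law makes the total force `∑ᵢ mᵢ γᵢ` vanish. Weighting the central-configuration
equations `γⱼ - γᵢ = ξ (rⱼ - rᵢ)` by `mⱼ` and summing over `j` then gives
`ξ ∑ⱼ mⱼ rⱼ = 0` whenever the total mass is zero, as it is for the masses `x, -x, y, -y`.
Since `ξ ≠ 0`, the mass moment `x r₁ - x r₂ + y r₃ - y r₄` vanishes, which is the claim.
-/

open Finset

lemma accel_eq_sum_univ {N : ℕ} (m : Fin N → ℝ) (r : Fin N → EuclideanSpace ℝ (Fin 2))
    (i : Fin N) : accel m r i = ∑ j, (m j / ‖r j - r i‖ ^ 3) • (r j - r i) := by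
  rw [accel, sum_erase]
  simp

lemma sum_smul_accel_eq_zero {N : ℕ} (m : Fin N → ℝ) (r : Fin N → EuclideanSpace ℝ (Fin 2)) :
    ∑ i, m i • accel m r i = 0 := by
  set f : Fin N → Fin N → EuclideanSpace ℝ (Fin 2) :=
    fun i j ↦ (m i * m j / ‖r j - r i‖ ^ 3) • (r j - r i)
  have hf_antisymm : ∀ i j, f j i = -f i j := fun i j ↦ by
    simp only [f]
    rw [norm_sub_rev, mul_comm (m j), ← neg_sub (r j), smul_neg]
  have hsum : ∑ i, m i • accel m r i = ∑ i, ∑ j, f i j := by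
    simp only [f, accel_eq_sum_univ, smul_sum, smul_smul, mul_div_assoc]
  have hanti : ∑ i, ∑ j, f i j = -∑ i, ∑ j, f i j :=
    calc ∑ i, ∑ j, f i j = ∑ i, ∑ j, f j i := sum_comm
      _ = ∑ i, ∑ j, -f i j := sum_congr rfl fun i _ ↦ sum_congr rfl fun j _ ↦ hf_antisymm i j
      _ = -∑ i, ∑ j, f i j := by simp only [sum_neg_distrib]
  rw [hsum]
  linear_combination (norm := module) (2⁻¹ : ℝ) • hanti

lemma IsCentral.sum_smul_eq_zero {N : ℕ} {m : Fin N → ℝ}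
    {r : Fin N → EuclideanSpace ℝ (Fin 2)} {ξ : ℝ} (hc : IsCentral m r ξ) (hm : ∑ j, m j = 0)
    (hξ : ξ ≠ 0) : ∑ j, m j • r j = 0 := by
  obtain _ | n := N
  · simp
  have hweighted := congrArg (fun v ↦ ∑ j, m j • v j) (funext (hc 0))
  simp only [smul_sub, sum_sub_distrib, ← sum_smul, hm, zero_smul, sub_zero,
    sum_smul_accel_eq_zero, smul_comm (m _) ξ, ← smul_sum, smul_zero] at hweighted
  exact (smul_eq_zero.mp hweighted.symm).resolve_left hξ

lemma norm_div_norm_eq_of_smul_eq_smul {E : Type*} [NormedAddCommGroup E] [NormedSpace ℝ E]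
    {a b : E} {x y : ℝ} (h : x • a = y • b) (hx : x ≠ 0) (hb : b ≠ 0) :
    ‖a‖ / ‖b‖ = |y| / |x| := by
  have hnorm : |x| * ‖a‖ = |y| * ‖b‖ := by
    simpa only [norm_smul, Real.norm_eq_abs] using congrArg norm h
  rw [div_eq_div_iff (norm_ne_zero_iff.mpr hb) (abs_ne_zero.mpr hx)]
  linarith

theorem central_config_nonzero_multiplier_is_trapezoid_general
    (x y : ℝ) (hx : x ≠ 0)
    (r : Fin 4 → EuclideanSpace ℝ (Fin 2))
    (hinj : Function.Injective r)
    (ξ : ℝ) (hξ : ξ ≠ 0)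
    (hc : IsCentral ![x, -x, y, -y] r ξ) :
    x • (r 1 - r 0) = y • (r 2 - r 3) ∧
    ‖r 1 - r 0‖ / ‖r 2 - r 3‖ = |y| / |x| := by
  have hmoment := hc.sum_smul_eq_zero (by simp [Fin.sum_univ_four]) hξ
  simp only [Fin.sum_univ_four, Matrix.cons_val] at hmoment
  have hpar : x • (r 1 - r 0) = y • (r 2 - r 3) := by
    linear_combination (norm := module) -hmoment
  exact ⟨hpar, norm_div_norm_eq_of_smul_eq_smul hpar hx (sub_ne_zero.mpr (hinj.ne (by decide)))⟩

/-- A planar non-collinear central configuration with nonzero multiplier for the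
masses x, -x, y, -y satisfies x(r₂ - r₁) = y(r₃ - r₄); in particular it is a
trapezoid: the segments [r₁, r₂] and [r₃, r₄] are parallel, with length ratio
‖r₂ - r₁‖ / ‖r₃ - r₄‖ = |y| / |x|. -/
theorem central_config_nonzero_multiplier_is_trapezoid
    (x y : ℝ) (hx : x ≠ 0) (hy : y ≠ 0)
    (r : Fin 4 → EuclideanSpace ℝ (Fin 2))
    (hinj : Function.Injective r)
    (hnc : ¬ Collinear ℝ (Set.range r))
    (ξ : ℝ) (hξ : ξ ≠ 0)
    (hc : IsCentral ![x, -x, y, -y] r ξ) :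
    x • (r 1 - r 0) = y • (r 2 - r 3) ∧
    ‖r 1 - r 0‖ / ‖r 2 - r 3‖ = |y| / |x| :=
  central_config_nonzero_multiplier_is_trapezoid_general x y hx r hinj ξ hξ hc
end

section
/- There is no co-circular four-body central configuration with vanishing total mass and vanishing vector of inertia: there exist no pairwise distinct points r₁, r₂, r₃, r₄ lying on a common circle in the Euclidean plane and nonzero real masses m₁, m₂, m₃, m₄ with m₁ + m₂ + m₃ + m₄ = 0 and m₁r₁ + m₂r₂ + m₃r₃ + m₄r₄ = 0 such that the configuration is central with some multiplier ξ. -/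
/-!
Pairing the accelerations with the positions gives the virial identity
`2 ∑ᵢ mᵢ ⟪γᵢ, rᵢ - c⟫ = -∑ᵢ ∑ⱼ mᵢ mⱼ / rᵢⱼ`. In a central configuration `γᵢ = a + ξ (rᵢ - c)`,
so when `∑ mᵢ = 0`, `∑ mᵢ rᵢ = 0` and every `‖rᵢ - c‖ = ρ` the left side vanishes, and so does the
potential `∑ mᵢ mⱼ / rᵢⱼ`.

On the other hand, put the points at angles `2φ₀ < 2φ₁ < 2φ₂ < 2φ₃` on the circle. The two linear
conditions determine the masses up to a common factor: `mᵢ` is, up to the sign `(-1)ⁱ`, the product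
of the chords of the triangle formed by the other three points. Writing `p, q, r, s` for the sides
and `e, f` for the diagonals of the cyclic quadrilateral, the potential becomes a positive multiple
of `f / e² + e / f² - (r / p² + p / r²) - (q / s² + s / q²)`, which is negative because Ptolemy's
theorem gives `e f > p r` and the ratio `e / f` lies between `p / r` and `r / p`.
-/

open Real RealInnerProductSpace Finset

section Virial

variable {N : ℕ} (m : Fin N → ℝ) (r : Fin N → EuclideanSpace ℝ (Fin 2))

theorem accel_eq_sum (i : Fin N) :
    accel m r i = ∑ j, (m j / ‖r j - r i‖ ^ 3) • (r j - r i) := by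
  rw [accel, sum_erase]
  simp

theorem two_mul_sum_mul_inner_accel (c : EuclideanSpace ℝ (Fin 2)) :
    2 * ∑ i, m i * ⟪accel m r i, r i - c⟫ = -∑ i, ∑ j, m i * m j / dist (r i) (r j) := by
  set f : Fin N → Fin N → ℝ := fun i j => m i * (m j / ‖r j - r i‖ ^ 3 * ⟪r j - r i, r i - c⟫)
  have hpair (i j : Fin N) : f i j + f j i = -(m i * m j / dist (r i) (r j)) := by
    have hinner : ⟪r j - r i, r i - c⟫ + ⟪r i - r j, r j - c⟫ = -dist (r i) (r j) ^ 2 := by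
      rw [dist_eq_norm', ← real_inner_self_eq_norm_sq, ← neg_sub (r j) (r i), inner_neg_left,
        ← sub_eq_add_neg, ← inner_sub_right, ← inner_neg_right]
      congr 1; abel
    rcases eq_or_ne (dist (r i) (r j)) 0 with hd | hd
    -- coincident points contribute `0` to both sides, as `x / 0 = 0`
    · simp [f, ← dist_eq_norm, dist_comm (r j), hd]
    · calc f i j + f j i = m i * m j / dist (r i) (r j) ^ 3
            * (⟪r j - r i, r i - c⟫ + ⟪r i - r j, r j - c⟫) := by
            simp only [f, ← dist_eq_norm, dist_comm (r j)]; ring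
        _ = -(m i * m j / dist (r i) (r j)) := by rw [hinner]; field_simp
  have hS : ∑ i, m i * ⟪accel m r i, r i - c⟫ = ∑ i, ∑ j, f i j := by
    simp only [f, accel_eq_sum, sum_inner, real_inner_smul_left, mul_sum]
  calc 2 * ∑ i, m i * ⟪accel m r i, r i - c⟫ = ∑ i, ∑ j, f i j + ∑ i, ∑ j, f j i := by
        rw [hS, sum_comm (f := fun i j => f j i)]; ring
    _ = -∑ i, ∑ j, m i * m j / dist (r i) (r j) := by
        simp only [← sum_add_distrib, hpair, sum_neg_distrib]

theorem sum_mul_inner_accel_eq_zero_of_isCentral {ξ : ℝ} (hc : IsCentral m r ξ)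
    (hmass : ∑ i, m i = 0) (hinertia : ∑ i, m i • r i = 0) {c : EuclideanSpace ℝ (Fin 2)} {ρ : ℝ}
    (hρ : ∀ i, dist (r i) c = ρ) :
    ∑ i, m i * ⟪accel m r i, r i - c⟫ = 0 := by
  rcases isEmpty_or_nonempty (Fin N) with _ | ⟨⟨k⟩⟩
  · simp
  have hcentred : ∑ i, m i • (r i - c) = 0 := by
    simp [smul_sub, sum_sub_distrib, ← sum_smul, hmass, hinertia]
  set a := accel m r k - ξ • (r k - c)
  have ha (i : Fin N) : accel m r i = a + ξ • (r i - c) := by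
    rw [show a + ξ • (r i - c) = accel m r k + ξ • (r i - r k) by simp only [a, smul_sub]; abel,
      ← hc k i]
    abel
  calc ∑ i, m i * ⟪accel m r i, r i - c⟫
      = ⟪a, ∑ i, m i • (r i - c)⟫ + ξ * ρ ^ 2 * ∑ i, m i := by
        simp only [ha, inner_add_left, real_inner_smul_left, real_inner_self_eq_norm_sq,
          ← dist_eq_norm, hρ, inner_sum, real_inner_smul_right, mul_add, sum_add_distrib, mul_sum]
        simp only [mul_comm (m _)]
    _ = 0 := by rw [hcentred, hmass]; simp

theorem sum_sum_div_dist_eq_zero_of_isCentral {ξ : ℝ} (hc : IsCentral m r ξ)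
    (hmass : ∑ i, m i = 0) (hinertia : ∑ i, m i • r i = 0) {c : EuclideanSpace ℝ (Fin 2)}
    {ρ : ℝ} (hρ : ∀ i, dist (r i) c = ρ) :
    ∑ i, ∑ j, m i * m j / dist (r i) (r j) = 0 := by
  have := two_mul_sum_mul_inner_accel m r c
  rw [sum_mul_inner_accel_eq_zero_of_isCentral m r hc hmass hinertia hρ] at this
  linarith

end Virial

theorem cross_cos_sin_two_mul (a b c : ℝ) :
    (cos (2 * b) - cos (2 * a)) * (sin (2 * c) - sin (2 * a))
      - (sin (2 * b) - sin (2 * a)) * (cos (2 * c) - cos (2 * a))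
      = 4 * sin (b - a) * sin (c - a) * sin (c - b) := by
  rw [cos_sub_cos, cos_sub_cos, sin_sub_sin, sin_sub_sin,
    show c - b = (c + a) - (b + a) by ring, sin_sub (c + a)]
  ring_nf

theorem ptolemy_sin (a b c d : ℝ) :
    sin (c - a) * sin (d - b) = sin (b - a) * sin (d - c) + sin (c - b) * sin (d - a) := by
  simp only [sin_sub]
  ring

theorem sin_mul_sin_sub_sin_mul_sin (a b c d : ℝ) :
    sin (d - c) * sin (d - b) - sin (b - a) * sin (c - a) = sin (d - a) * sin (a + d - b - c) := by
  have h := two_mul_sin_mul_sin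
  linear_combination (norm := ring_nf)
    (h (d - c) (d - b) - h (b - a) (c - a) - h (d - a) (a + d - b - c)) / 2

theorem sin_mul_sin_mul_sq_add_sq_le {a b c d : ℝ} (hbc : 0 ≤ sin (c - b))
    (had : 0 ≤ sin (d - a)) :
    sin (b - a) * sin (d - c) * (sin (c - a) ^ 2 + sin (d - b) ^ 2)
      ≤ (sin (b - a) ^ 2 + sin (d - c) ^ 2) * (sin (c - a) * sin (d - b)) := by
  have h₁ := sin_mul_sin_sub_sin_mul_sin a b c d
  have h₂ := sin_mul_sin_sub_sin_mul_sin c d a b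
  have hX : sin (c + b - d - a) = -sin (a + d - b - c) := by rw [← sin_neg]; ring_nf
  have hsin (x y : ℝ) : sin (x - y) = -sin (y - x) := by rw [← neg_sub, sin_neg]
  rw [hsin b d, hsin a c, hsin b c, hX] at h₂
  have hfactor : sin (b - a) * sin (d - c) * (sin (c - a) ^ 2 + sin (d - b) ^ 2)
      - (sin (b - a) ^ 2 + sin (d - c) ^ 2) * (sin (c - a) * sin (d - b))
      = -(sin (c - b) * sin (d - a) * sin (a + d - b - c) ^ 2) := by
    linear_combination (sin (b - a) * sin (d - b) - sin (d - c) * sin (c - a)) * h₁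
      - sin (d - a) * sin (a + d - b - c) * h₂
  have := mul_nonneg (mul_nonneg hbc had) (sq_nonneg (sin (a + d - b - c)))
  linarith

-- `cross_cos_sin_two_mul x c d` is affine in `(cos 2x, sin 2x)` and vanishes at `x = c, d`; its
-- mass-weighted sum over `x = a, b, c, d` is zero.
theorem mass_relation {a b c d M₀ M₁ M₂ M₃ : ℝ} (hsum : M₀ + M₁ + M₂ + M₃ = 0)
    (hcos : M₀ * cos (2 * a) + M₁ * cos (2 * b) + M₂ * cos (2 * c) + M₃ * cos (2 * d) = 0)
    (hsin : M₀ * sin (2 * a) + M₁ * sin (2 * b) + M₂ * sin (2 * c) + M₃ * sin (2 * d) = 0)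
    (hcd : sin (d - c) ≠ 0) :
    M₀ * (sin (c - a) * sin (d - a)) + M₁ * (sin (c - b) * sin (d - b)) = 0 := by
  have hL (x : ℝ) := cross_cos_sin_two_mul x c d
  refine (mul_eq_zero.1 ?_).resolve_right hcd
  linear_combination ((cos (2 * c) * sin (2 * d) - sin (2 * c) * cos (2 * d)) * hsum
    + (sin (2 * c) - sin (2 * d)) * hcos + (cos (2 * d) - cos (2 * c)) * hsin
    - M₀ * hL a - M₁ * hL b) / 4

-- `(x³ + y³) / (x² y²) = (t^(3/2) + t^(-3/2)) / √(x y)` with `t = x / y`: the numerator grows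
-- with `|log t|`, `hle` says that `e / f` is nearer to `1` than `p / r`, and `hlt` compares the
-- denominators.
theorem div_sq_add_div_sq_lt {p r e f : ℝ} (hp : 0 < p) (hr : 0 < r) (he : 0 < e) (hf : 0 < f)
    (hlt : p * r < e * f) (hle : p * r * (e ^ 2 + f ^ 2) ≤ (p ^ 2 + r ^ 2) * (e * f)) :
    f / e ^ 2 + e / f ^ 2 < r / p ^ 2 + p / r ^ 2 := by
  have hsum : p * r * (e + f) < e * f * (p + r) := by
    have hsq : (p * r * (e + f)) ^ 2 < (e * f * (p + r)) ^ 2 := by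
      have h₁ : p * r * (p * r * (e ^ 2 + f ^ 2)) ≤ p * r * ((p ^ 2 + r ^ 2) * (e * f)) := by
        gcongr
      have h₂ : p * r * ((p ^ 2 + r ^ 2) * (e * f)) < e * f * ((p ^ 2 + r ^ 2) * (e * f)) := by
        gcongr
      have h₃ : 2 * (p * r) * (e * f) * (p * r) < 2 * (p * r) * (e * f) * (e * f) := by
        gcongr
      nlinarith
    exact lt_of_pow_lt_pow_left₀ 2 (by positivity) hsq
  have hdiff : p * r * (e ^ 2 - e * f + f ^ 2) ≤ e * f * (p ^ 2 - p * r + r ^ 2) := by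
    linarith
  have hcubes : (e ^ 3 + f ^ 3) * (p ^ 2 * r ^ 2) < (p ^ 3 + r ^ 3) * (e ^ 2 * f ^ 2) :=
    calc (e ^ 3 + f ^ 3) * (p ^ 2 * r ^ 2)
        = p * r * (e + f) * (p * r * (e ^ 2 - e * f + f ^ 2)) := by ring
      _ ≤ p * r * (e + f) * (e * f * (p ^ 2 - p * r + r ^ 2)) := by gcongr
      _ < e * f * (p + r) * (e * f * (p ^ 2 - p * r + r ^ 2)) := by
        gcongr
        exact mul_pos (mul_pos he hf) (by nlinarith [sq_nonneg (p - r), mul_pos hp hr])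
      _ = (p ^ 3 + r ^ 3) * (e ^ 2 * f ^ 2) := by ring
  calc f / e ^ 2 + e / f ^ 2 = (e ^ 3 + f ^ 3) / (e ^ 2 * f ^ 2) := by field_simp; ring
    _ < (p ^ 3 + r ^ 3) / (p ^ 2 * r ^ 2) :=
      (div_lt_div_iff₀ (by positivity) (by positivity)).2 hcubes
    _ = r / p ^ 2 + p / r ^ 2 := by field_simp; ring

-- `p, q, r, s` are the consecutive sides and `e, f` the diagonals of a cyclic quadrilateral whose
-- vertices carry the masses `M₀, …, M₃`; `h₁, h₂, h₃` are the affine relations among them.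
theorem mutual_potential_neg {p q r s e f M₀ M₁ M₂ M₃ : ℝ} (hp : 0 < p) (hq : 0 < q)
    (hr : 0 < r) (hs : 0 < s) (he : 0 < e) (hf : 0 < f) (hptolemy : e * f = p * r + q * s)
    (hle : p * r * (e ^ 2 + f ^ 2) ≤ (p ^ 2 + r ^ 2) * (e * f)) (hM₀ : M₀ ≠ 0)
    (h₁ : M₀ * e * s + M₁ * q * f = 0) (h₂ : M₀ * p * s = M₂ * q * r)
    (h₃ : M₀ * p * e + M₃ * f * r = 0) :
    M₀ * M₁ / p + M₀ * M₂ / e + M₀ * M₃ / s + M₁ * M₂ / q + M₁ * M₃ / f + M₂ * M₃ / r < 0 := by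
  have hM₁ : M₁ = -(M₀ * e * s) / (q * f) := by field_simp; linarith
  have hM₂ : M₂ = M₀ * p * s / (q * r) := by field_simp; linarith
  have hM₃ : M₃ = -(M₀ * p * e) / (f * r) := by field_simp; linarith
  have hdiag : f / e ^ 2 + e / f ^ 2 < r / p ^ 2 + p / r ^ 2 :=
    div_sq_add_div_sq_lt hp hr he hf (by linarith [mul_pos hq hs]) hle
  calc M₀ * M₁ / p + M₀ * M₂ / e + M₀ * M₃ / s + M₁ * M₂ / q + M₁ * M₃ / f + M₂ * M₃ / r
      = M₀ ^ 2 * (p * s * e) / (q * f * r)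
        * ((f / e ^ 2 + e / f ^ 2) - (r / p ^ 2 + p / r ^ 2) - (q / s ^ 2 + s / q ^ 2)) := by
        rw [hM₁, hM₂, hM₃]; field_simp; ring
    _ < 0 := mul_neg_of_pos_of_neg (by positivity) (by
        have : 0 < q / s ^ 2 + s / q ^ 2 := by positivity
        linarith)

section SortedAngles

variable {φ : Fin 4 → ℝ}

theorem sum_sum_div_abs_sin_eq (hpos : ∀ i j, i < j → 0 < sin (φ j - φ i)) (M : Fin 4 → ℝ) :
    ∑ i, ∑ j, M i * M j / |sin (φ i - φ j)|
      = 2 * (M 0 * M 1 / sin (φ 1 - φ 0) + M 0 * M 2 / sin (φ 2 - φ 0)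
        + M 0 * M 3 / sin (φ 3 - φ 0) + M 1 * M 2 / sin (φ 2 - φ 1)
        + M 1 * M 3 / sin (φ 3 - φ 1) + M 2 * M 3 / sin (φ 3 - φ 2)) := by
  have habs {i j : Fin 4} (hij : i < j) : |sin (φ j - φ i)| = sin (φ j - φ i) :=
    abs_of_pos (hpos i j hij)
  have habs' {i j : Fin 4} (hij : i < j) : |sin (φ i - φ j)| = sin (φ j - φ i) := by
    rw [← neg_sub, sin_neg, abs_neg, habs hij]
  simp (disch := decide) only [Fin.sum_univ_four, sub_self, sin_zero, abs_zero, div_zero, habs,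
    habs']
  ring

theorem sum_sum_div_abs_sin_neg (hφ : StrictMono φ) (hπ : φ 3 < φ 0 + π) {M : Fin 4 → ℝ}
    (hM : M ≠ 0) (hsum : ∑ i, M i = 0) (hcos : ∑ i, M i * cos (2 * φ i) = 0)
    (hsin : ∑ i, M i * sin (2 * φ i) = 0) :
    ∑ i, ∑ j, M i * M j / |sin (φ i - φ j)| < 0 := by
  have hpos (i j : Fin 4) (hij : i < j) : 0 < sin (φ j - φ i) := by
    have h₀ : φ 0 ≤ φ i := hφ.monotone (Fin.zero_le i)
    have h₃ : φ j ≤ φ 3 := hφ.monotone (Fin.le_last j)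
    exact sin_pos_of_pos_of_lt_pi (sub_pos.2 (hφ hij)) (by linarith)
  have hneg (i j : Fin 4) : sin (φ i - φ j) = -sin (φ j - φ i) := by rw [← neg_sub, sin_neg]
  simp only [Fin.sum_univ_four] at hsum hcos hsin
  have h₁ := mass_relation hsum hcos hsin (hpos 2 3 (by decide)).ne'
  have h₂ := mass_relation (a := φ 0) (b := φ 2) (c := φ 1) (d := φ 3) (M₀ := M 0) (M₁ := M 2)
    (M₂ := M 1) (M₃ := M 3) (by linarith) (by linarith) (by linarith) (hpos 1 3 (by decide)).ne'
  have h₃ := mass_relation (a := φ 0) (b := φ 3) (c := φ 1) (d := φ 2) (M₀ := M 0) (M₁ := M 3)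
    (M₂ := M 1) (M₃ := M 2) (by linarith) (by linarith) (by linarith) (hpos 1 2 (by decide)).ne'
  rw [hneg 1 2] at h₂
  rw [hneg 1 3, hneg 2 3] at h₃
  have hM₀ : M 0 ≠ 0 := by
    intro h₀
    refine hM (funext fun i => ?_)
    fin_cases i
    · exact h₀
    · simpa [h₀, (hpos 1 2 _).ne', (hpos 1 3 _).ne'] using h₁
    · simpa [h₀, (hpos 1 2 _).ne', (hpos 2 3 _).ne'] using h₂
    · simpa [h₀, (hpos 1 3 _).ne', (hpos 2 3 _).ne'] using h₃
  rw [sum_sum_div_abs_sin_eq hpos]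
  have hU := mutual_potential_neg (hpos 0 1 (by decide)) (hpos 1 2 (by decide))
    (hpos 2 3 (by decide)) (hpos 0 3 (by decide)) (hpos 0 2 (by decide)) (hpos 1 3 (by decide))
    (ptolemy_sin (φ 0) (φ 1) (φ 2) (φ 3))
    (sin_mul_sin_mul_sq_add_sq_le (hpos 1 2 (by decide)).le (hpos 0 3 (by decide)).le) hM₀
    (M₁ := M 1) (M₂ := M 2) (M₃ := M 3)
    (by linear_combination h₁) (by linear_combination h₂) (by linear_combination h₃)
  linarith

end SortedAngles

theorem exists_eq_norm_smul_cos_sin (v : EuclideanSpace ℝ (Fin 2)) :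
    ∃ θ ∈ Set.Ioc (-π) π, v = ‖v‖ • !₂[cos θ, sin θ] := by
  set z := Complex.orthonormalBasisOneI.repr.symm v
  have hz : ‖z‖ = ‖v‖ := LinearIsometryEquiv.norm_map _ v
  refine ⟨z.arg, ⟨Complex.neg_pi_lt_arg z, Complex.arg_le_pi z⟩, ?_⟩
  ext i
  fin_cases i
  · simp [← hz, Complex.norm_mul_cos_arg, z]
  · simp [← hz, Complex.norm_mul_sin_arg, z]

theorem norm_cos_sin_sub_cos_sin (θ ψ : ℝ) :
    ‖!₂[cos θ, sin θ] - !₂[cos ψ, sin ψ]‖ = 2 * |sin ((θ - ψ) / 2)| := by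
  have h : (cos θ - cos ψ) ^ 2 + (sin θ - sin ψ) ^ 2 = (2 * sin ((θ - ψ) / 2)) ^ 2 := by
    rw [cos_sub_cos, sin_sub_sin]
    linear_combination 4 * sin ((θ - ψ) / 2) ^ 2 * sin_sq_add_cos_sq ((θ + ψ) / 2)
  rw [EuclideanSpace.norm_eq, Fin.sum_univ_two]
  simp [h, sqrt_sq_eq_abs, abs_mul]

theorem sum_sum_div_abs_sin_half_neg {θ : Fin 4 → ℝ} (hθ : Function.Injective θ)
    (hθπ : ∀ i, θ i ∈ Set.Ioc (-π) π) {M : Fin 4 → ℝ} (hM : M ≠ 0) (hsum : ∑ i, M i = 0)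
    (hcos : ∑ i, M i * cos (θ i) = 0) (hsin : ∑ i, M i * sin (θ i) = 0) :
    ∑ i, ∑ j, M i * M j / |sin ((θ i - θ j) / 2)| < 0 := by
  set σ := Tuple.sort θ
  have hmono : StrictMono (θ ∘ σ) :=
    (Tuple.monotone_sort θ).strictMono_of_injective (hθ.comp σ.injective)
  have hsorted := sum_sum_div_abs_sin_neg (φ := fun k => θ (σ k) / 2) (M := fun k => M (σ k))
    (fun a b h => div_lt_div_of_pos_right (hmono h) two_pos)
    (show θ (σ 3) / 2 < θ (σ 0) / 2 + π by linarith [(hθπ (σ 0)).1, (hθπ (σ 3)).2])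
    (fun h => hM (funext fun i => by simpa using congrFun h (σ.symm i)))
    (by rwa [Equiv.sum_comp σ M])
    (by simpa [mul_div_cancel₀] using (Equiv.sum_comp σ fun i => M i * cos (θ i)).trans hcos)
    (by simpa [mul_div_cancel₀] using (Equiv.sum_comp σ fun i => M i * sin (θ i)).trans hsin)
  simp only [← sub_div] at hsorted
  rwa [← Equiv.sum_comp σ, sum_congr rfl fun i _ => (Equiv.sum_comp σ _).symm]

theorem sum_sum_div_dist_neg_of_cocircular {r : Fin 4 → EuclideanSpace ℝ (Fin 2)}
    (hr : Function.Injective r) {c : EuclideanSpace ℝ (Fin 2)} {ρ : ℝ}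
    (hρ : ∀ i, dist (r i) c = ρ) {m : Fin 4 → ℝ} (hm : m ≠ 0) (hmass : ∑ i, m i = 0)
    (hinertia : ∑ i, m i • r i = 0) :
    ∑ i, ∑ j, m i * m j / dist (r i) (r j) < 0 := by
  have hρpos : 0 < ρ := by
    refine lt_of_le_of_ne (hρ 0 ▸ dist_nonneg) fun h₀ => ?_
    have hc (i : Fin 4) : r i = c := dist_eq_zero.1 ((hρ i).trans h₀.symm)
    exact absurd (hr ((hc 0).trans (hc 1).symm)) (by decide)
  choose θ hθπ hrθ using fun i => exists_eq_norm_smul_cos_sin (r i - c)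
  simp only [← dist_eq_norm, hρ] at hrθ
  have hθ : Function.Injective θ := fun i j h => hr (sub_left_inj.1 (by rw [hrθ i, hrθ j, h]))
  have hdist (i j : Fin 4) : dist (r i) (r j) = 2 * ρ * |sin ((θ i - θ j) / 2)| := by
    rw [dist_eq_norm, ← sub_sub_sub_cancel_right _ _ c, hrθ, hrθ, ← smul_sub, norm_smul,
      norm_cos_sin_sub_cos_sin, Real.norm_of_nonneg hρpos.le]
    ring
  have hunit : ∑ i, m i • !₂[cos (θ i), sin (θ i)] = 0 := by
    have : ∑ i, m i • (r i - c) = 0 := by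
      simp [smul_sub, sum_sub_distrib, ← sum_smul, hmass, hinertia]
    simp only [hrθ, smul_comm (m _) ρ, ← smul_sum] at this
    exact (smul_eq_zero.1 this).resolve_left hρpos.ne'
  have hcos : ∑ i, m i * cos (θ i) = 0 := by simpa using congrArg (· 0) hunit
  have hsin : ∑ i, m i * sin (θ i) = 0 := by simpa using congrArg (· 1) hunit
  calc ∑ i, ∑ j, m i * m j / dist (r i) (r j)
      = (2 * ρ)⁻¹ * ∑ i, ∑ j, m i * m j / |sin ((θ i - θ j) / 2)| := by
        simp only [hdist, mul_sum]
        refine sum_congr rfl fun i _ => sum_congr rfl fun j _ => ?_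
        field_simp
    _ < 0 := mul_neg_of_pos_of_neg (by positivity) (sum_sum_div_abs_sin_half_neg hθ hθπ hm
        hmass hcos hsin)

/-- There is no co-circular four-body central configuration with vanishing total mass
and vanishing vector of inertia. -/
theorem no_cocircular_central_config_vanishing_mass_inertia :
    ¬ ∃ (r : Fin 4 → EuclideanSpace ℝ (Fin 2)) (m : Fin 4 → ℝ) (ξ : ℝ),
        Function.Injective r ∧
        (∃ (c : EuclideanSpace ℝ (Fin 2)) (ρ : ℝ), ∀ i, dist (r i) c = ρ) ∧
        (∀ i, m i ≠ 0) ∧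
        ∑ i, m i = 0 ∧
        ∑ i, m i • r i = 0 ∧
        IsCentral m r ξ := by
  rintro ⟨r, m, ξ, hr, ⟨c, ρ, hρ⟩, hm, hmass, hinertia, hcentral⟩
  have hzero := sum_sum_div_dist_eq_zero_of_isCentral m r hcentral hmass hinertia hρ
  have hneg := sum_sum_div_dist_neg_of_cocircular hr hρ (fun h => hm 0 (congrFun h 0)) hmass
    hinertia
  exact hneg.ne hzero
end

section
/- Four pairwise distinct points r₁, r₂, r₃, r₄ lying on a common circle in the Euclidean plane cannot satisfy the identity 1/‖r₂−r₁‖³ + 1/‖r₄−r₃‖³ = 1/‖r₃−r₁‖³ + 1/‖r₄−r₂‖³ = 1/‖r₃−r₂‖³ + 1/‖r₄−r₁‖³. -/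
/-!
Place the four points on the circle by their angles; the chord between angles `α` and `β` has
length `2ρ |sin ((α - β) / 2)|`. After sorting the angles cyclically, the half-arcs spanned by the
two diagonals lie strictly between the half-arcs spanned by one pair of opposite sides and have the
same sum. Since `x ↦ 1 / sin x ^ 3` is strictly convex on `(0, π)`, the diagonals then have a
strictly smaller sum of inverse cubes than those sides, so two of the three matching sums differ.
-/

open Real Set

theorem strictConvexOn_one_div_sin_pow {n : ℕ} (hn : n ≠ 0) :
    StrictConvexOn ℝ (Ioo 0 π) fun x => 1 / sin x ^ n := by
  have hconv : ConvexOn ℝ (Ioi 0) fun t : ℝ => 1 / t ^ n :=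
    (convexOn_zpow (-n : ℤ)).congr fun t _ => by simp [zpow_neg, one_div]
  refine ⟨convex_Ioo 0 π, fun x hx y hy hxy a b ha hb hab => ?_⟩
  have hsx : 0 < sin x := sin_pos_of_pos_of_lt_pi hx.1 hx.2
  have hsy : 0 < sin y := sin_pos_of_pos_of_lt_pi hy.1 hy.2
  have hmix : 0 < a * sin x + b * sin y := by positivity
  have hconc : a * sin x + b * sin y < sin (a * x + b * y) :=
    strictConcaveOn_sin_Icc.2 (Ioo_subset_Icc_self hx) (Ioo_subset_Icc_self hy) hxy ha hb hab
  calc 1 / sin (a • x + b • y) ^ n < 1 / (a * sin x + b * sin y) ^ n :=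
        one_div_lt_one_div_of_lt (by positivity) (pow_lt_pow_left₀ hconc hmix.le hn)
    _ ≤ a • (1 / sin x ^ n) + b • (1 / sin y ^ n) :=
        hconv.2 (mem_Ioi.2 hsx) (mem_Ioi.2 hsy) ha.le hb.le hab

theorem StrictConvexOn.add_lt_add_of_add_eq {s : Set ℝ} {f : ℝ → ℝ} (hf : StrictConvexOn ℝ s f)
    {a b c d : ℝ} (ha : a ∈ s) (hd : d ∈ s) (hab : a < b) (hbd : b < d) (hsum : b + c = a + d) :
    f b + f c < f a + f d := by
  set t := (d - b) / (d - a)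
  have hda : 0 < d - a := by linarith
  have ht : 0 < t := div_pos (by linarith) hda
  have ht' : 0 < 1 - t := by
    rw [sub_pos, div_lt_one hda]; linarith
  have hb : t • a + (1 - t) • d = b := by
    simp only [smul_eq_mul, t]; field_simp; ring
  have hc : (1 - t) • a + t • d = c := by
    simp only [smul_eq_mul, t]; field_simp; linear_combination (a - d) * hsum
  have hfb := hf.2 ha hd (by linarith) ht ht' (by ring)
  have hfc := hf.2 ha hd (by linarith) ht' ht (by ring)
  rw [hb] at hfb
  rw [hc] at hfc
  simp only [smul_eq_mul] at hfb hfc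
  linarith

theorem one_div_chord_pow_add_lt {n : ℕ} (hn : n ≠ 0) {k a b c d : ℝ} (hk : 0 < k)
    (hab : a < b) (hbc : b < c) (hcd : c < d) (hda : d - a < 2 * π) :
    1 / (k * |sin ((c - a) / 2)|) ^ n + 1 / (k * |sin ((d - b) / 2)|) ^ n
      < 1 / (k * |sin ((c - b) / 2)|) ^ n + 1 / (k * |sin ((d - a) / 2)|) ^ n := by
  have habs : ∀ x, 0 < x → x < 2 * π →
      1 / (k * |sin (x / 2)|) ^ n = 1 / k ^ n * (1 / sin (x / 2) ^ n) := fun x hx hx' => by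
    rw [abs_of_pos (sin_pos_of_pos_of_lt_pi (by linarith) (by linarith)), mul_pow,
      one_div_mul_one_div]
  have key := (strictConvexOn_one_div_sin_pow hn).add_lt_add_of_add_eq
    (a := (c - b) / 2) (b := (c - a) / 2) (c := (d - b) / 2) (d := (d - a) / 2)
    ⟨by linarith, by linarith⟩ ⟨by linarith, by linarith⟩ (by linarith) (by linarith) (by ring)
  rw [habs _ (by linarith) (by linarith), habs _ (by linarith) (by linarith),
    habs _ (by linarith) (by linarith), habs _ (by linarith) (by linarith), ← mul_add, ← mul_add]
  exact mul_lt_mul_of_pos_left key (by positivity)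

theorem matching_sum_eq_of_pairwise_ne {M : Type*} [AddCommMagma M] {S : Fin 4 → Fin 4 → M}
    (hS : ∀ i j, S i j = S j i) (h₁ : S 0 1 + S 2 3 = S 0 2 + S 1 3)
    (h₂ : S 0 2 + S 1 3 = S 1 2 + S 0 3) {a b c d : Fin 4} (hab : a ≠ b) (hac : a ≠ c)
    (had : a ≠ d) (hbc : b ≠ c) (hbd : b ≠ d) (hcd : c ≠ d) :
    S a b + S c d = S 0 1 + S 2 3 := by
  fin_cases a <;> fin_cases b <;> fin_cases c <;> fin_cases d <;>
    simp_all [hS 1 0, hS 2 0, hS 3 0, hS 2 1, hS 3 1, hS 3 2, add_comm]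

theorem Complex.norm_sub_eq_two_mul_abs_sin {z w : ℂ} {ρ : ℝ} (hz : ‖z‖ = ρ) (hw : ‖w‖ = ρ) :
    ‖z - w‖ = 2 * ρ * |Real.sin ((z.arg - w.arg) / 2)| := by
  have hρ : 0 ≤ ρ := hz ▸ norm_nonneg z
  have hzw : z - w = ρ * Complex.exp (w.arg * Complex.I)
      * (Complex.exp (Complex.I * ↑(z.arg - w.arg)) - 1) := by
    conv_lhs => rw [← Complex.norm_mul_exp_arg_mul_I z, ← Complex.norm_mul_exp_arg_mul_I w, hz, hw]
    rw [mul_sub, mul_one, mul_assoc, ← Complex.exp_add]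
    push_cast
    ring_nf
  rw [hzw, norm_mul, norm_mul, Complex.norm_exp_ofReal_mul_I, Complex.norm_exp_I_mul_ofReal_sub_one,
    Complex.norm_real, Real.norm_of_nonneg hρ, norm_mul, Real.norm_two, Real.norm_eq_abs]
  ring

theorem exists_angle_dist_eq {ι : Type*} (p : ι → EuclideanSpace ℝ (Fin 2))
    (c : EuclideanSpace ℝ (Fin 2)) {ρ : ℝ} (hp : ∀ i, dist (p i) c = ρ) :
    ∃ θ : ι → ℝ, (∀ i, θ i ∈ Ioc (-π) π) ∧
      ∀ i j, dist (p i) (p j) = 2 * ρ * |sin ((θ i - θ j) / 2)| := by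
  let z : ι → ℂ := fun i => Complex.orthonormalBasisOneI.repr.symm (p i - c)
  have hz : ∀ i j, ‖z i - z j‖ = dist (p i) (p j) := fun i j => by
    rw [← map_sub, LinearIsometryEquiv.norm_map, sub_sub_sub_cancel_right, dist_eq_norm]
  refine ⟨fun i => (z i).arg, fun i => ⟨Complex.neg_pi_lt_arg _, Complex.arg_le_pi _⟩,
    fun i j => ?_⟩
  have hzρ : ∀ i, ‖z i‖ = ρ := fun i => by
    rw [LinearIsometryEquiv.norm_map, ← dist_eq_norm, hp i]
  rw [← hz, Complex.norm_sub_eq_two_mul_abs_sin (hzρ i) (hzρ j)]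

/-- Four pairwise distinct points on a common circle cannot satisfy the identity
1/r₁₂³ + 1/r₃₄³ = 1/r₁₃³ + 1/r₂₄³ = 1/r₂₃³ + 1/r₁₄³ on sums of inverse cubes of
distances over the three perfect matchings. -/
theorem no_cocircular_distance_identity
    (r : Fin 4 → EuclideanSpace ℝ (Fin 2))
    (hinj : Function.Injective r)
    (c : EuclideanSpace ℝ (Fin 2)) (ρ : ℝ) (hcirc : ∀ i, dist (r i) c = ρ) :
    ¬ (1 / ‖r 1 - r 0‖ ^ 3 + 1 / ‖r 3 - r 2‖ ^ 3
          = 1 / ‖r 2 - r 0‖ ^ 3 + 1 / ‖r 3 - r 1‖ ^ 3 ∧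
       1 / ‖r 2 - r 0‖ ^ 3 + 1 / ‖r 3 - r 1‖ ^ 3
          = 1 / ‖r 2 - r 1‖ ^ 3 + 1 / ‖r 3 - r 0‖ ^ 3) := by
  rintro ⟨h₁, h₂⟩
  obtain ⟨θ, hθ_mem, hθ_dist⟩ := exists_angle_dist_eq r c hcirc
  have hρ : 0 < ρ := by
    have h01 := dist_pos.2 (hinj.ne (by decide : (0 : Fin 4) ≠ 1))
    refine lt_of_le_of_ne (hcirc 0 ▸ dist_nonneg) fun h => ?_
    simp [hθ_dist, ← h] at h01
  have hθ : Function.Injective θ := fun i j h => hinj <| dist_eq_zero.1 <| by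
    rw [hθ_dist, h, sub_self, zero_div, sin_zero, abs_zero, mul_zero]
  set σ := Tuple.sort θ
  have hsorted : StrictMono fun i => θ (σ i) :=
    (Tuple.monotone_sort θ).strictMono_of_injective (hθ.comp σ.injective)
  have hσ : ∀ i j, i ≠ j → σ i ≠ σ j := fun i j => σ.injective.ne
  let S : Fin 4 → Fin 4 → ℝ := fun i j => 1 / ‖r j - r i‖ ^ 3
  have hS : ∀ i j, S i j = S j i := fun i j => by simp only [S, norm_sub_rev]
  have hdiag : S (σ 0) (σ 2) + S (σ 1) (σ 3) = S 0 1 + S 2 3 :=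
    matching_sum_eq_of_pairwise_ne hS h₁ h₂ (hσ 0 2 (by decide)) (hσ 0 1 (by decide))
      (hσ 0 3 (by decide)) (hσ 2 1 (by decide)) (hσ 2 3 (by decide)) (hσ 1 3 (by decide))
  have hside : S (σ 1) (σ 2) + S (σ 0) (σ 3) = S 0 1 + S 2 3 :=
    matching_sum_eq_of_pairwise_ne hS h₁ h₂ (hσ 1 2 (by decide)) (hσ 1 0 (by decide))
      (hσ 1 3 (by decide)) (hσ 2 0 (by decide)) (hσ 2 3 (by decide)) (hσ 0 3 (by decide))
  have hlt := one_div_chord_pow_add_lt three_ne_zero (mul_pos two_pos hρ)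
    (hsorted (by decide : (0 : Fin 4) < 1)) (hsorted (by decide : (1 : Fin 4) < 2))
    (hsorted (by decide : (2 : Fin 4) < 3))
    (show θ (σ 3) - θ (σ 0) < 2 * π by linarith [(hθ_mem (σ 0)).1, (hθ_mem (σ 3)).2])
  simp only [S, ← dist_eq_norm, hθ_dist] at hdiag hside
  linarith
end
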